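/- arXiv:1902.00441 — 8 statements merged into one kernel-verified Lean document; each statement's English description precedes it below -/
import Mathlib

section
/- Let N ≥ 2 and let a be an integer coprime to N. Then the lattice rule X_N = ((n/N, {an/N}))_{n=0}^{N−1} is a critical point of the energy functional E in the following sense: for every index 0 ≤ m ≤ N−1 and every direction (u,v) ∈ ℝ², the function t ↦ E(X_t), where X_t is obtained from X_N by replacing the point (m/N, {am/N}) by (m/N + tu, {am/N} + tv), is differentiable at t = 0 with derivative equal to 0. -/
/-- The energy functional `E(X) = Σ_{m ≠ n} Π_{k=1}^d φ(x_{m,k} − x_{n,k})` with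
`φ(s) = 1 − log(2|sin(πs)|)`, specialized to `d = 2` (points of `ℝ²`). -/
noncomputable def energy2 {N : ℕ} (X : Fin N → ℝ × ℝ) : ℝ :=
  ∑ i : Fin N, ∑ j : Fin N,
    if i ≠ j then
      (1 - Real.log (2 * |Real.sin (Real.pi * ((X i).1 - (X j).1))|)) *
        (1 - Real.log (2 * |Real.sin (Real.pi * ((X i).2 - (X j).2))|))
    else 0

noncomputable def latPhi (x : ℝ) : ℝ := 1 - Real.log (2 * |Real.sin (Real.pi * x)|)
noncomputable def latPsi (x : ℝ) : ℝ :=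
  -(Real.pi * (Real.cos (Real.pi * x) / Real.sin (Real.pi * x)))

lemma latPhi_def (x : ℝ) : latPhi x = 1 - Real.log (2 * |Real.sin (Real.pi * x)|) := rfl

lemma latSin_shift (x : ℝ) (k : ℤ) :
    Real.sin (Real.pi * (x + k)) = (-1) ^ k * Real.sin (Real.pi * x) := by
  rw [mul_add, mul_comm Real.pi (k:ℝ), Real.sin_add_int_mul_pi]

lemma latCos_shift (x : ℝ) (k : ℤ) :
    Real.cos (Real.pi * (x + k)) = (-1) ^ k * Real.cos (Real.pi * x) := by
  rw [mul_add, mul_comm Real.pi (k:ℝ), Real.cos_add_int_mul_pi]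

lemma latAbs_neg_one_zpow (k : ℤ) : |((-1 : ℝ)) ^ k| = 1 := by
  rcases Int.even_or_odd k with h | h
  · rw [h.neg_one_zpow, abs_one]
  · rw [h.neg_one_zpow, abs_neg, abs_one]

lemma latAbsSin_shift (x : ℝ) (k : ℤ) :
    |Real.sin (Real.pi * (x + k))| = |Real.sin (Real.pi * x)| := by
  rw [latSin_shift, abs_mul, latAbs_neg_one_zpow, one_mul]

lemma latPhi_shift (x : ℝ) (k : ℤ) : latPhi (x + k) = latPhi x := by
  simp [latPhi, latAbsSin_shift]

lemma latPsi_shift (x : ℝ) (k : ℤ) : latPsi (x + k) = latPsi x := by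
  have h : ((-1 : ℝ)) ^ k ≠ 0 := zpow_ne_zero _ (by norm_num)
  simp only [latPsi, latSin_shift, latCos_shift, mul_div_mul_left _ _ h]

lemma latPhi_neg (x : ℝ) : latPhi (-x) = latPhi x := by
  simp [latPhi, mul_neg, Real.sin_neg, abs_neg]

lemma latPsi_neg (x : ℝ) : latPsi (-x) = -latPsi x := by
  simp only [latPsi, mul_neg, Real.sin_neg, Real.cos_neg, neg_neg, div_neg, mul_neg]

lemma latSin_shift_ne {x : ℝ} (e : ℤ) (h : Real.sin (Real.pi * x) ≠ 0) :
    Real.sin (Real.pi * (x + e)) ≠ 0 := by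
  rw [latSin_shift]
  exact mul_ne_zero (zpow_ne_zero _ (by norm_num)) h

lemma latSin_neg_ne {x : ℝ} (h : Real.sin (Real.pi * x) ≠ 0) :
    Real.sin (Real.pi * (-x)) ≠ 0 := by
  rw [mul_neg, Real.sin_neg]
  exact neg_ne_zero.2 h

lemma latPhi_hasDerivAt (c w : ℝ) (h : Real.sin (Real.pi * c) ≠ 0) :
    HasDerivAt (fun t : ℝ => latPhi (c + t * w)) (w * latPsi c) 0 := by
  have hlin : HasDerivAt (fun t : ℝ => c + t * w) w 0 := by
    simpa using ((hasDerivAt_id (0:ℝ)).mul_const w).const_add c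
  have hin : HasDerivAt (fun s : ℝ => Real.pi * s) Real.pi c := by
    simpa using (hasDerivAt_id c).const_mul Real.pi
  have hsin : HasDerivAt (fun s : ℝ => Real.sin (Real.pi * s))
      (Real.cos (Real.pi * c) * Real.pi) c := by
    exact (Real.hasDerivAt_sin (Real.pi * c)).comp c hin
  have hlog : HasDerivAt (fun s : ℝ => Real.log (Real.sin (Real.pi * s)))
      (Real.cos (Real.pi * c) * Real.pi / Real.sin (Real.pi * c)) c := hsin.log h
  have hg : HasDerivAt (fun s : ℝ => 1 - (Real.log 2 + Real.log (Real.sin (Real.pi * s))))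
      (latPsi c) c := by
    have := (hlog.const_add (Real.log 2)).const_sub 1
    refine this.congr_deriv ?_
    rw [latPsi]
    ring
  have hg' : HasDerivAt (fun s : ℝ => 1 - (Real.log 2 + Real.log (Real.sin (Real.pi * s))))
      (latPsi c) ((fun t : ℝ => c + t * w) 0) := by simpa using hg
  have hcomp := hg'.comp 0 hlin
  have hne : ∀ᶠ t in nhds (0:ℝ), Real.sin (Real.pi * (c + t * w)) ≠ 0 := by
    have hcont : Continuous fun t : ℝ => Real.sin (Real.pi * (c + t * w)) := by continuity
    exact hcont.continuousAt.eventually_ne (by simpa using h)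
  have heq : (fun t : ℝ => latPhi (c + t * w)) =ᶠ[nhds 0]
      fun t => 1 - (Real.log 2 + Real.log (Real.sin (Real.pi * (c + t * w)))) := by
    filter_upwards [hne] with t ht
    rw [latPhi, Real.log_mul (by norm_num) (abs_ne_zero.2 ht), Real.log_abs]
  have := hcomp.congr_of_eventuallyEq heq
  simpa [mul_comm] using this

lemma latSin_ne {N : ℕ} (hN : 0 < N) (z : ℤ) (hz : ¬ (N:ℤ) ∣ z) :
    Real.sin (Real.pi * ((z : ℝ) / N)) ≠ 0 := by
  intro h0
  rw [Real.sin_eq_zero_iff] at h0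
  obtain ⟨n, hn⟩ := h0
  have hpi : (Real.pi : ℝ) ≠ 0 := Real.pi_ne_zero
  have hNR : (N : ℝ) ≠ 0 := Nat.cast_ne_zero.2 hN.ne'
  have h2 : (n : ℝ) = z / N := by
    apply mul_left_cancel₀ hpi
    rw [← hn]; ring
  have h3 : (n : ℝ) * N = z := by
    rw [h2, div_mul_cancel₀ _ hNR]
  exact hz ⟨n, by exact_mod_cast (by linarith : (z:ℝ) = (N:ℝ) * n)⟩


/-- Let `N ≥ 2` and `a` coprime to `N`.  The lattice rule
`X_N = ((n/N, {an/N}))_{n=0}^{N−1}` is a critical point of the energy `E`: for every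
index `m` and every direction `(u,v) ∈ ℝ²`, the map
`t ↦ E(X_t)`, where `X_t` replaces the point `(m/N, {am/N})` by
`(m/N + tu, {am/N} + tv)`, is differentiable at `t = 0` with derivative `0`. -/
theorem stmt_0 (N : ℕ) (hN : 2 ≤ N) (a : ℤ) (ha : Int.gcd a N = 1)
    (m : Fin N) (u v : ℝ) :
    HasDerivAt
      (fun t : ℝ =>
        energy2 (Function.update
          (fun n : Fin N => ((n : ℝ) / N, Int.fract ((a : ℝ) * n / N)))
          m
          ((m : ℝ) / N + t * u, Int.fract ((a : ℝ) * m / N) + t * v)))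
      0 0 := by
  have hN0 : 0 < N := by omega
  have hNR : (N : ℝ) ≠ 0 := Nat.cast_ne_zero.2 hN0.ne'
  set cx : Fin N → ℝ := fun j => (m : ℝ) / N - (j : ℝ) / N with hcx
  set cy : Fin N → ℝ := fun j =>
    Int.fract ((a : ℝ) * m / N) - Int.fract ((a : ℝ) * j / N) with hcy
  set g : Fin N → ℝ := fun j =>
    u * latPsi (cx j) * latPhi (cy j) + latPhi (cx j) * (v * latPsi (cy j)) with hg
  set D : Fin N → Fin N → ℝ := fun i j =>
    (if i = m ∧ j ≠ m then g j else 0) + (if j = m ∧ i ≠ m then g i else 0) with hD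
  -- basic divisibility fact
  have hdvd : ∀ j : Fin N, j ≠ m → ¬ (N : ℤ) ∣ (((m:ℕ) : ℤ) - ((j:ℕ) : ℤ)) := by
    intro j hj hd
    have h1 : |(((m:ℕ) : ℤ) - ((j:ℕ) : ℤ))| < (N : ℤ) := by
      have := j.isLt
      have := m.isLt
      rw [abs_lt]
      omega
    have h0 := Int.eq_zero_of_abs_lt_dvd hd h1
    exact hj (by apply Fin.ext; omega)
  -- x-coordinate difference: exact form
  have hcxform : ∀ j : Fin N, cx j = ((((m:ℕ) : ℤ) - ((j:ℕ) : ℤ) : ℤ) : ℝ) / N := by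
    intro j
    simp only [hcx]
    push_cast
    ring
  -- y-coordinate difference: form modulo an integer
  have hcyform : ∀ j : Fin N, ∃ e : ℤ,
      cy j = ((a * (((m:ℕ) : ℤ) - ((j:ℕ) : ℤ)) : ℤ) : ℝ) / N + (e : ℝ) := by
    intro j
    refine ⟨⌊(a : ℝ) * j / N⌋ - ⌊(a : ℝ) * m / N⌋, ?_⟩
    simp only [hcy, Int.fract]
    push_cast
    field_simp
    ring
  have hcxN : ∀ j : Fin N, cx j * N = ((m:ℕ) : ℝ) - ((j:ℕ) : ℝ) := by
    intro j
    simp only [hcx]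
    field_simp
  have hcyN : ∀ j : Fin N, ∃ e : ℤ,
      cy j * N = (a : ℝ) * (((m:ℕ) : ℝ) - ((j:ℕ) : ℝ)) + (e : ℝ) * N := by
    intro j
    obtain ⟨e, he⟩ := hcyform j
    refine ⟨e, ?_⟩
    rw [he, add_mul, div_mul_cancel₀ _ hNR]
    push_cast
    ring
  have hsx : ∀ j : Fin N, j ≠ m → Real.sin (Real.pi * cx j) ≠ 0 := by
    intro j hj
    rw [hcxform j]
    exact latSin_ne hN0 _ (hdvd j hj)
  have hsy : ∀ j : Fin N, j ≠ m → Real.sin (Real.pi * cy j) ≠ 0 := by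
    intro j hj
    obtain ⟨e, he⟩ := hcyform j
    rw [he]
    apply latSin_shift_ne
    apply latSin_ne hN0
    intro hd
    have hco : IsCoprime (N : ℤ) a := by
      rw [Int.isCoprime_iff_gcd_eq_one, Int.gcd_comm]
      exact ha
    exact hdvd j hj (hco.dvd_of_dvd_mul_left hd)
  -- the pairing involution
  set σ : Fin N → Fin N :=
    fun j => ⟨(2 * (m:ℕ) + (N - (j:ℕ))) % N, Nat.mod_lt _ hN0⟩ with hσ
  have hkey : ∀ j : Fin N, ∃ k : ℤ,
      (((σ j : Fin N) : ℕ) : ℤ) = 2 * ((m:ℕ) : ℤ) - ((j:ℕ) : ℤ) + k * N := by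
    intro j
    have hj : (j:ℕ) < N := j.isLt
    refine ⟨1 - (((2 * (m:ℕ) + (N - (j:ℕ))) / N : ℕ) : ℤ), ?_⟩
    have h1 : (2 * (m:ℕ) + (N - (j:ℕ))) % N + N * ((2 * (m:ℕ) + (N - (j:ℕ))) / N)
        = 2 * (m:ℕ) + (N - (j:ℕ)) := Nat.mod_add_div _ _
    have h2 : ((σ j : Fin N) : ℕ) = (2 * (m:ℕ) + (N - (j:ℕ))) % N := by
      simp [hσ]
    rw [h2]
    have h3 := congrArg (fun x : ℕ => (x : ℤ)) h1
    push_cast [Nat.cast_sub hj.le] at h3 ⊢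
    linear_combination h3
  have hσm : σ m = m := by
    apply Fin.ext
    have h1 : 2 * (m:ℕ) + (N - (m:ℕ)) = (m:ℕ) + N := by
      have := m.isLt; omega
    simp [hσ, h1, Nat.add_mod_right, Nat.mod_eq_of_lt m.isLt]
  have hσne : ∀ j : Fin N, j ≠ m → σ j ≠ m := by
    intro j hj he
    obtain ⟨k, hk⟩ := hkey j
    rw [he] at hk
    exact hdvd j hj ⟨-k, by linear_combination -hk⟩
  have hσσ : ∀ j : Fin N, σ (σ j) = j := by
    intro j
    obtain ⟨k, hk⟩ := hkey j
    obtain ⟨k', hk'⟩ := hkey (σ j)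
    apply Fin.ext
    have h2 : |((((σ (σ j) : Fin N) : ℕ) : ℤ)) - ((j:ℕ) : ℤ)| < (N : ℤ) := by
      have := (σ (σ j)).isLt
      have := j.isLt
      rw [abs_lt]
      omega
    have h3 : ((((σ (σ j) : Fin N) : ℕ) : ℤ)) - ((j:ℕ) : ℤ) = 0 :=
      Int.eq_zero_of_abs_lt_dvd ⟨k' - k, by linear_combination hk' - hk⟩ h2
    omega
  have hcxσ : ∀ j : Fin N, ∃ k : ℤ, cx (σ j) = -(cx j) + (k : ℝ) := by
    intro j
    obtain ⟨k, hk⟩ := hkey j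
    refine ⟨-k, ?_⟩
    have hσR : (((σ j : Fin N) : ℕ) : ℝ)
        = 2 * ((m:ℕ) : ℝ) - ((j:ℕ) : ℝ) + (k : ℝ) * N := by
      have h0 := congrArg (fun z : ℤ => (z : ℝ)) hk
      simp only [Int.cast_add, Int.cast_sub, Int.cast_mul, Int.cast_natCast,
        Int.cast_ofNat, Int.cast_two] at h0
      convert h0 using 2
    refine mul_right_cancel₀ hNR ?_
    have h2 := hcxN j
    have h3 := hcxN (σ j)
    rw [Int.cast_neg]
    linear_combination h3 + h2 - hσR
  have hcyσ : ∀ j : Fin N, ∃ p : ℤ, cy (σ j) = -(cy j) + (p : ℝ) := by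
    intro j
    obtain ⟨k, hk⟩ := hkey j
    obtain ⟨e, he⟩ := hcyN j
    obtain ⟨e', he'⟩ := hcyN (σ j)
    refine ⟨e' + e - a * k, ?_⟩
    have hσR : (((σ j : Fin N) : ℕ) : ℝ)
        = 2 * ((m:ℕ) : ℝ) - ((j:ℕ) : ℝ) + (k : ℝ) * N := by
      have h0 := congrArg (fun z : ℤ => (z : ℝ)) hk
      simp only [Int.cast_add, Int.cast_sub, Int.cast_mul, Int.cast_natCast,
        Int.cast_ofNat, Int.cast_two] at h0
      convert h0 using 2
    refine mul_right_cancel₀ hNR ?_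
    rw [Int.cast_sub, Int.cast_add, Int.cast_mul]
    linear_combination he' + he - (a : ℝ) * hσR
  have hgσ : ∀ j : Fin N, g (σ j) = -(g j) := by
    intro j
    obtain ⟨k, hk⟩ := hcxσ j
    obtain ⟨p, hp⟩ := hcyσ j
    simp only [hg, hk, hp, latPhi_shift, latPsi_shift, latPhi_neg, latPsi_neg]
    ring
  -- the paired sum vanishes
  have hT : ∑ j : Fin N, (if j = m then 0 else g j) = 0 := by
    have h1 : ∀ j : Fin N,
        (if j = m then (0:ℝ) else g j) + (if σ j = m then 0 else g (σ j)) = 0 := by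
      intro j
      by_cases hj : j = m
      · simp [hj, hσm]
      · rw [if_neg hj, if_neg (hσne j hj), hgσ j]
        ring
    refine Finset.sum_ninvolution σ h1 ?_ (fun j => Finset.mem_univ _) hσσ
    intro j hfj heq
    apply hfj
    have := h1 j
    rw [heq] at this
    linarith
  -- per-pair derivatives
  have e1 : ∀ (j : Fin N) (t : ℝ), ((m : ℝ) / N + t * u) - (j : ℝ) / N = cx j + t * u := by
    intro j t
    simp only [hcx]
    ring
  have e2 : ∀ (j : Fin N) (t : ℝ),
      (Int.fract ((a : ℝ) * m / N) + t * v) - Int.fract ((a : ℝ) * j / N) = cy j + t * v := by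
    intro j t
    simp only [hcy]
    ring
  have e1' : ∀ (i : Fin N) (t : ℝ), (i : ℝ) / N - ((m : ℝ) / N + t * u) = -(cx i) + t * (-u) := by
    intro i t
    simp only [hcx]
    ring
  have e2' : ∀ (i : Fin N) (t : ℝ),
      Int.fract ((a : ℝ) * i / N) - (Int.fract ((a : ℝ) * m / N) + t * v) = -(cy i) + t * (-v) := by
    intro i t
    simp only [hcy]
    ring
  have main : HasDerivAt
      (fun t : ℝ =>
        energy2 (Function.update
          (fun n : Fin N => ((n : ℝ) / N, Int.fract ((a : ℝ) * n / N)))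
          m
          ((m : ℝ) / N + t * u, Int.fract ((a : ℝ) * m / N) + t * v)))
      (∑ i : Fin N, ∑ j : Fin N, D i j) 0 := by
    simp only [energy2, ← latPhi_def]
    apply HasDerivAt.fun_sum
    intro i _
    apply HasDerivAt.fun_sum
    intro j _
    by_cases hij : i = j
    · subst hij
      have hDz : D i i = 0 := by simp [hD]
      rw [hDz]
      simp only [ne_eq, not_true_eq_false, if_false]
      exact hasDerivAt_const 0 0
    · by_cases him : i = m
      · rw [him] at hij ⊢
        have hjm : j ≠ m := fun h => hij h.symm
        have hDv : D m j = g j := by simp [hD, hjm]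
        rw [hDv]
        simp only [ne_eq, hij, not_false_eq_true, if_true, Function.update_self,
          Function.update_of_ne hjm]
        simp only [e1 j, e2 j]
        have h := (latPhi_hasDerivAt (cx j) u (hsx j hjm)).mul
          (latPhi_hasDerivAt (cy j) v (hsy j hjm))
        refine h.congr_deriv ?_
        simp only [hg, zero_mul, add_zero, mul_zero]
        try ring
      · by_cases hjm : j = m
        · rw [hjm] at hij ⊢
          have hDv : D i m = g i := by simp [hD, him]
          rw [hDv]
          simp only [ne_eq, hij, not_false_eq_true, if_true, Function.update_self,
            Function.update_of_ne him]
          simp only [e1' i, e2' i]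
          have h := (latPhi_hasDerivAt (-(cx i)) (-u) (latSin_neg_ne (hsx i him))).mul
            (latPhi_hasDerivAt (-(cy i)) (-v) (latSin_neg_ne (hsy i him)))
          have hval : (-u) * latPsi (-(cx i)) * latPhi (-(cy i) + 0 * (-v))
              + latPhi (-(cx i) + 0 * (-u)) * ((-v) * latPsi (-(cy i))) = g i := by
            simp only [zero_mul, add_zero, latPsi_neg, latPhi_neg, hg]
            ring
          rw [← hval]
          exact h
        · -- neither i nor j is m : constant function
          have hDz : D i j = 0 := by simp [hD, him, hjm]
          rw [hDz]
          simp only [ne_eq, hij, not_false_eq_true, if_true,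
            Function.update_of_ne him, Function.update_of_ne hjm]
          exact hasDerivAt_const _ _
  -- the derivative vanishes
  have hS : ∑ i : Fin N, ∑ j : Fin N, D i j = 0 := by
    have h2 : ∀ i : Fin N, ∑ j : Fin N, (if j = m ∧ i ≠ m then g i else 0)
        = (if i = m then 0 else g i) := by
      intro i
      by_cases hi : i = m
      · simp [hi]
      · simp [hi, Finset.sum_ite_eq']
    have h1 : ∀ i : Fin N, ∑ j : Fin N, (if i = m ∧ j ≠ m then g j else 0)
        = (if i = m then ∑ j : Fin N, (if j = m then 0 else g j) else 0) := by
      intro i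
      by_cases hi : i = m
      · rw [hi]
        rw [if_pos rfl]
        apply Finset.sum_congr rfl
        intro j _
        by_cases hj : j = m <;> simp [hj]
      · simp [hi]
    have hsplit : ∀ i : Fin N, ∑ j : Fin N, D i j
        = (if i = m then ∑ j : Fin N, (if j = m then 0 else g j) else 0)
          + (if i = m then 0 else g i) := by
      intro i
      simp only [hD]
      rw [Finset.sum_add_distrib, h1 i, h2 i]
    rw [Finset.sum_congr rfl (fun i _ => hsplit i), Finset.sum_add_distrib]
    rw [Finset.sum_ite_eq' Finset.univ m
      (fun _ => ∑ j : Fin N, (if j = m then 0 else g j))]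
    simp [hT]
  exact hS ▸ main
end

section
/- Let N ≥ 2 and let a be an integer coprime to N with a² ≡ 1 (mod N). Then the stated quadratic form is dominated by its diagonal: |Σ_{n=1}^{N−1} cot(πn/N) cot(π{an/N})| < Σ_{n=1}^{N−1} (1/sin²(πn/N)) · (1 − log(2 sin(π{an/N}))). -/
lemma pade {x : ℝ} (hx : 1 ≤ x) : 2*(x-1)/(x+1) ≤ Real.log x := by
  have hmono : MonotoneOn (fun t : ℝ => Real.log t + 4/(t+1)) (Set.Ici 1) := by
    apply monotoneOn_of_deriv_nonneg (convex_Ici 1)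
    · apply ContinuousOn.add
      · exact Real.continuousOn_log.mono (by intro t ht; simp at ht ⊢; linarith)
      · apply ContinuousOn.div continuousOn_const (by fun_prop)
        intro t ht; simp at ht; positivity
    · intro t ht
      rw [interior_Ici] at ht
      simp only [Set.mem_Ioi] at ht
      apply DifferentiableAt.differentiableWithinAt
      apply DifferentiableAt.add
      · exact Real.differentiableAt_log (by linarith)
      · apply DifferentiableAt.div (differentiableAt_const _) (by fun_prop)
        positivity
    · intro t ht
      rw [interior_Ici] at ht
      simp only [Set.mem_Ioi] at ht
      have ht0 : t ≠ 0 := by linarith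
      have ht1 : t + 1 ≠ 0 := by positivity
      have hd : deriv (fun t : ℝ => Real.log t + 4/(t+1)) t
          = 1/t - 4/(t+1)^2 := by
        have h1 : HasDerivAt (fun t : ℝ => Real.log t + 4/(t+1)) (1/t + (0*(t+1) - 4*1)/(t+1)^2) t := by
          apply HasDerivAt.add
          · simpa using Real.hasDerivAt_log ht0
          · exact (hasDerivAt_const t 4).div ((hasDerivAt_id t).add_const 1) ht1
        rw [h1.deriv]; ring
      rw [hd]
      rw [div_sub_div _ _ ht0 (pow_ne_zero 2 ht1), div_nonneg_iff]
      left
      constructor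
      · nlinarith [sq_nonneg (t-1)]
      · positivity
  have := hmono (Set.mem_Ici.mpr le_rfl) (Set.mem_Ici.mpr hx) hx
  simp only [Real.log_one, zero_add] at this
  have hx1 : (0:ℝ) < x + 1 := by linarith
  rw [div_le_iff₀ hx1]
  have h2 : 4/(x+1) = 4 * (x+1)⁻¹ := by ring
  have h3 : (4:ℝ)/(1+1) = 2 := by norm_num
  rw [h3] at this
  have h4 : 4/(x+1) ≤ Real.log x + 4/(x+1) - 2 + 2 - Real.log x := by linarith
  have h5 : Real.log x ≥ 2 - 4/(x+1) := by linarith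
  have h6 : (2 - 4/(x+1)) * (x+1) = 2*(x-1) := by field_simp; ring
  calc 2*(x-1) = (2 - 4/(x+1)) * (x+1) := h6.symm
    _ ≤ Real.log x * (x+1) := by apply mul_le_mul_of_nonneg_right h5 (le_of_lt hx1)


-- polynomial core: u,v ≥ 1
lemma polyC {u v : ℝ} (hu : 1 ≤ u) (hv : 1 ≤ v) :
    (2*u*v - 2) * ((u+1)*(v+1)) <
    (3068/10000)*(u^2+v^2)*((u+1)*(v+1)) + 2*u^2*(v-1)*(u+1) + 2*v^2*(u-1)*(v+1) := by
  obtain ⟨p, hp, rfl⟩ : ∃ p : ℝ, 0 ≤ p ∧ u = 1 + p := ⟨u - 1, by linarith, by ring⟩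
  obtain ⟨q, hq, rfl⟩ : ∃ q : ℝ, 0 ≤ q ∧ v = 1 + q := ⟨v - 1, by linarith, by ring⟩
  nlinarith [mul_nonneg hp hq, sq_nonneg (p-q), mul_nonneg (mul_nonneg hp hq) (sq_nonneg (p-q)),
    mul_nonneg (mul_nonneg hp hp) hq, mul_nonneg (mul_nonneg hq hq) hp,
    mul_nonneg hp (sq_nonneg (p - 9/5)), mul_nonneg hq (sq_nonneg (q - 9/5)),
    sq_nonneg (p - 9/5), sq_nonneg (q - 9/5), mul_nonneg (mul_nonneg hp hq) (mul_nonneg hp hq)]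

lemma lemB {u v : ℝ} (hu : 1 ≤ u) (hv : 1 ≤ v) :
    2*u*v - 2 < u^2*(1 - Real.log 2 + Real.log v) + v^2*(1 - Real.log 2 + Real.log u) := by
  have hu1 : (0:ℝ) < u + 1 := by linarith
  have hv1 : (0:ℝ) < v + 1 := by linarith
  set A := 2*(v-1)/(v+1) with hA
  set B := 2*(u-1)/(u+1) with hB
  have hAv : A * (v+1) = 2*(v-1) := div_mul_cancel₀ _ (ne_of_gt hv1)
  have hBu : B * (u+1) = 2*(u-1) := div_mul_cancel₀ _ (ne_of_gt hu1)
  have key : 2*u*v - 2 < (3068/10000)*(u^2+v^2) + u^2*A + v^2*B := by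
    have h := polyC hu hv
    have hpos : (0:ℝ) < (u+1)*(v+1) := mul_pos hu1 hv1
    have hrw : (3068/10000)*(u^2+v^2)*((u+1)*(v+1)) + 2*u^2*(v-1)*(u+1) + 2*v^2*(u-1)*(v+1)
        = ((3068/10000)*(u^2+v^2) + u^2*A + v^2*B) * ((u+1)*(v+1)) := by
      have e1 : 2*u^2*(v-1)*(u+1) = u^2*(A*(v+1))*(u+1) := by rw [hAv]; ring
      have e2 : 2*v^2*(u-1)*(v+1) = v^2*(B*(u+1))*(v+1) := by rw [hBu]; ring
      rw [e1, e2]; ring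
    rw [hrw] at h
    exact lt_of_mul_lt_mul_right h (le_of_lt hpos)
  have hlogv : A ≤ Real.log v := pade hv
  have hlogu : B ≤ Real.log u := pade hu
  have hc : Real.log 2 < 0.6932 := lt_trans Real.log_two_lt_d9 (by norm_num)
  nlinarith [sq_nonneg u, sq_nonneg v, mul_le_mul_of_nonneg_left hlogv (sq_nonneg u),
    mul_le_mul_of_nonneg_left hlogu (sq_nonneg v), sq_nonneg (u-1), sq_nonneg (v-1)]

lemma core {X Y : ℝ} (hX0 : 0 < X) (hXp : X < Real.pi) (hY0 : 0 < Y) (hYp : Y < Real.pi) :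
    2 * |Real.cot X * Real.cot Y| <
      (1 / Real.sin X ^ 2) * (1 - Real.log (2 * Real.sin Y)) +
      (1 / Real.sin Y ^ 2) * (1 - Real.log (2 * Real.sin X)) := by
  have hsX : 0 < Real.sin X := Real.sin_pos_of_pos_of_lt_pi hX0 hXp
  have hsY : 0 < Real.sin Y := Real.sin_pos_of_pos_of_lt_pi hY0 hYp
  have hsX1 : Real.sin X ≤ 1 := Real.sin_le_one X
  have hsY1 : Real.sin Y ≤ 1 := Real.sin_le_one Y
  set u := 1 / Real.sin X with hu'
  set v := 1 / Real.sin Y with hv'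
  have hu : 1 ≤ u := (le_div_iff₀ hsX).mpr (by linarith)
  have hv : 1 ≤ v := (le_div_iff₀ hsY).mpr (by linarith)
  have habs : |Real.cos X * Real.cos Y| ≤ 1 - Real.sin X * Real.sin Y := by
    nlinarith [sq_abs (Real.cos X * Real.cos Y), abs_nonneg (Real.cos X * Real.cos Y),
      Real.sin_sq_add_cos_sq X, Real.sin_sq_add_cos_sq Y, sq_nonneg (Real.sin X - Real.sin Y),
      mul_pos hsX hsY]
  have hcot : |Real.cot X * Real.cot Y| = |Real.cos X * Real.cos Y| / (Real.sin X * Real.sin Y) := by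
    rw [Real.cot_eq_cos_div_sin, Real.cot_eq_cos_div_sin, abs_mul, abs_div, abs_div,
      abs_of_pos hsX, abs_of_pos hsY, abs_mul]
    field_simp
  have h1 : 2 * |Real.cot X * Real.cot Y| ≤ 2*u*v - 2 := by
    rw [hcot, mul_div_assoc' 2 _ _, div_le_iff₀ (mul_pos hsX hsY)]
    have heq : (2*u*v - 2) * (Real.sin X * Real.sin Y) = 2 - 2*(Real.sin X * Real.sin Y) := by
      rw [hu', hv']; field_simp
    rw [heq]
    nlinarith [habs, abs_nonneg (Real.cos X * Real.cos Y)]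
  have h2 := lemB hu hv
  have hlogY : Real.log (2 * Real.sin Y) = Real.log 2 - Real.log v := by
    rw [Real.log_mul two_ne_zero (ne_of_gt hsY), hv', one_div, Real.log_inv]; ring
  have hlogX : Real.log (2 * Real.sin X) = Real.log 2 - Real.log u := by
    rw [Real.log_mul two_ne_zero (ne_of_gt hsX), hu', one_div, Real.log_inv]; ring
  have husq : 1 / Real.sin X ^ 2 = u^2 := by rw [hu']; ring
  have hvsq : 1 / Real.sin Y ^ 2 = v^2 := by rw [hv']; ring
  rw [husq, hvsq, hlogX, hlogY]
  calc 2 * |Real.cot X * Real.cot Y| ≤ 2*u*v - 2 := h1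
    _ < u^2*(1 - Real.log 2 + Real.log v) + v^2*(1 - Real.log 2 + Real.log u) := h2
    _ = u ^ 2 * (1 - (Real.log 2 - Real.log v)) + v ^ 2 * (1 - (Real.log 2 - Real.log u)) := by ring


noncomputable def sig (N : ℕ) (a : ℤ) (n : ℕ) : ℕ := ((a * n) % (N : ℤ)).toNat

lemma sig_mem {N : ℕ} (a : ℤ) (hN : 2 ≤ N) (ha : Int.gcd a N = 1) {n : ℕ}
    (hn : n ∈ Finset.Ico 1 N) : sig N a n ∈ Finset.Ico 1 N := by
  have hNpos : (0:ℤ) < N := by exact_mod_cast Nat.lt_of_lt_of_le Nat.zero_lt_two hN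
  simp only [Finset.mem_Ico] at hn ⊢
  have h0 : 0 ≤ (a * n) % N := Int.emod_nonneg _ (ne_of_gt hNpos)
  have hlt : (a * n) % N < N := Int.emod_lt_of_pos _ hNpos
  have hne : (a * n) % N ≠ 0 := by
    intro h
    have hdvd : (N:ℤ) ∣ a * n := Int.dvd_of_emod_eq_zero h
    have hco : IsCoprime (N:ℤ) a := by
      rw [Int.isCoprime_iff_gcd_eq_one, Int.gcd_comm]; exact_mod_cast ha
    have hd2 : (N:ℤ) ∣ (n:ℤ) := hco.dvd_of_dvd_mul_left hdvd
    have hn1 : (0:ℤ) < n := by exact_mod_cast hn.1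
    have h5 := Int.le_of_dvd hn1 hd2
    have h6 : (n:ℤ) < N := by exact_mod_cast hn.2
    omega
  have h1 : 1 ≤ sig N a n := by
    rw [sig]; omega
  have h2 : sig N a n < N := by
    rw [sig]; omega
  exact ⟨h1, h2⟩

lemma sig_fract {N : ℕ} (a : ℤ) (hN : 2 ≤ N) {n : ℕ} (hn : n ∈ Finset.Ico 1 N) :
    Int.fract ((a : ℝ) * n / N) = (sig N a n : ℝ) / N := by
  have hNpos : (0:ℤ) < N := by exact_mod_cast Nat.lt_of_lt_of_le Nat.zero_lt_two hN
  have hNR : (0:ℝ) < N := by exact_mod_cast Nat.lt_of_lt_of_le Nat.zero_lt_two hN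
  set r : ℤ := (a * n) % N with hr
  have h0 : 0 ≤ r := Int.emod_nonneg _ (ne_of_gt hNpos)
  have hlt : r < N := Int.emod_lt_of_pos _ hNpos
  have hdm : (N:ℤ) * ((a * n) / N) + r = a * n := Int.mul_ediv_add_emod _ _
  have hcast : (a : ℝ) * n / N = ((a * n / N : ℤ) : ℝ) + (r:ℝ)/N := by
    have hne : (N:ℝ) ≠ 0 := ne_of_gt hNR
    have hnum : (a:ℝ) * n = (N:ℝ) * ((a * n / N : ℤ) : ℝ) + (r:ℝ) := by
      have := congrArg (fun z : ℤ => (z : ℝ)) hdm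
      push_cast at this
      linarith
    rw [hnum, add_div, mul_div_cancel_left₀ _ hne]
  rw [hcast, Int.fract_intCast_add, Int.fract_eq_self.mpr ⟨by positivity, by
    rw [div_lt_one hNR]; exact_mod_cast hlt⟩]
  have hc2 : ((sig N a n : ℕ) : ℝ) = (r : ℝ) := by
    have : ((sig N a n : ℕ) : ℤ) = r := by rw [sig, ← hr, Int.toNat_of_nonneg h0]
    exact_mod_cast this
  rw [hc2]

lemma sig_invol {N : ℕ} (a : ℤ) (hN : 2 ≤ N) (ha2 : Int.ModEq (N : ℤ) (a ^ 2) 1) {n : ℕ}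
    (hn : n ∈ Finset.Ico 1 N) : sig N a (sig N a n) = n := by
  have hNpos : (0:ℤ) < N := by exact_mod_cast Nat.lt_of_lt_of_le Nat.zero_lt_two hN
  simp only [Finset.mem_Ico] at hn
  set r : ℤ := (a * n) % N with hr
  have h0 : 0 ≤ r := Int.emod_nonneg _ (ne_of_gt hNpos)
  have hcast : ((sig N a n : ℕ) : ℤ) = r := by rw [sig, ← hr, Int.toNat_of_nonneg h0]
  have hmod : (a * r) % N = n := by
    have h1 : a * r ≡ a * (a * n) [ZMOD N] := by
      apply Int.ModEq.mul_left
      rw [hr]; exact Int.emod_emod_of_dvd _ dvd_rfl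
    have h2 : a * (a * n) ≡ 1 * n [ZMOD N] := by
      have he : a * (a * n) = a^2 * n := by ring
      rw [he]; exact ha2.mul_right _
    have h3 : a * r ≡ n [ZMOD N] := by simpa using h1.trans h2
    have h4 : (n:ℤ) % N = n := Int.emod_eq_of_lt (by positivity) (by exact_mod_cast hn.2)
    calc (a * r) % N = (n:ℤ) % N := h3
      _ = n := h4
  rw [sig, hcast, hmod]
  simp

/-- Let `N ≥ 2` and let `a` be coprime to `N` with `a² ≡ 1 (mod N)`.
Then `|Σ_{n=1}^{N−1} cot(πn/N) cot(π{an/N})| <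
Σ_{n=1}^{N−1} (1/sin²(πn/N)) · (1 − log(2 sin(π{an/N})))`. -/
theorem stmt_3 (N : ℕ) (hN : 2 ≤ N) (a : ℤ) (ha : Int.gcd a N = 1)
    (ha2 : Int.ModEq (N : ℤ) (a ^ 2) 1) :
    |∑ n ∈ Finset.Ico 1 N,
        Real.cot (Real.pi * n / N) * Real.cot (Real.pi * Int.fract ((a : ℝ) * n / N))| <
      ∑ n ∈ Finset.Ico 1 N,
        (1 / Real.sin (Real.pi * n / N) ^ 2) *
          (1 - Real.log (2 * Real.sin (Real.pi * Int.fract ((a : ℝ) * n / N)))) := by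
  have hNR : (0:ℝ) < N := by exact_mod_cast Nat.lt_of_lt_of_le Nat.zero_lt_two hN
  set S := Finset.Ico 1 N with hS
  set X : ℕ → ℝ := fun n => Real.pi * n / N with hX
  -- range facts
  have hXrange : ∀ n ∈ S, 0 < X n ∧ X n < Real.pi := by
    intro n hn
    simp only [hS, Finset.mem_Ico] at hn
    constructor
    · have : (0:ℝ) < n := by exact_mod_cast hn.1
      rw [hX]
      positivity
    · rw [hX, div_lt_iff₀ hNR]
      have : (n:ℝ) < N := by exact_mod_cast hn.2
      nlinarith [Real.pi_pos]
  have hfr : ∀ n ∈ S, Real.pi * Int.fract ((a : ℝ) * n / N) = X (sig N a n) := by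
    intro n hn
    rw [sig_fract a hN hn, hX]
    ring
  -- rewrite both sums
  have hL : ∑ n ∈ S, Real.cot (Real.pi * n / N) * Real.cot (Real.pi * Int.fract ((a : ℝ) * n / N))
      = ∑ n ∈ S, Real.cot (X n) * Real.cot (X (sig N a n)) := by
    apply Finset.sum_congr rfl
    intro n hn
    rw [hfr n hn, hX]
  have hR : ∑ n ∈ S, (1 / Real.sin (Real.pi * n / N) ^ 2) *
        (1 - Real.log (2 * Real.sin (Real.pi * Int.fract ((a : ℝ) * n / N))))
      = ∑ n ∈ S, (1 / Real.sin (X n) ^ 2) * (1 - Real.log (2 * Real.sin (X (sig N a n)))) := by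
    apply Finset.sum_congr rfl
    intro n hn
    rw [hfr n hn, hX]
  rw [hL, hR]
  set G : ℕ → ℝ := fun n => (1 / Real.sin (X n) ^ 2) * (1 - Real.log (2 * Real.sin (X (sig N a n)))) with hG
  set F : ℕ → ℝ := fun n => |Real.cot (X n) * Real.cot (X (sig N a n))| with hF
  have step1 : |∑ n ∈ S, Real.cot (X n) * Real.cot (X (sig N a n))| ≤ ∑ n ∈ S, F n :=
    Finset.abs_sum_le_sum_abs _ _
  -- reindexed G sum
  have hreindex : ∑ n ∈ S, G (sig N a n) = ∑ n ∈ S, G n :=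
    Finset.sum_nbij' (sig N a) (sig N a) (fun n hn => sig_mem a hN ha hn)
      (fun n hn => sig_mem a hN ha hn) (fun n hn => sig_invol a hN ha2 hn)
      (fun n hn => sig_invol a hN ha2 hn) (fun n hn => rfl)
  have hne : S.Nonempty := by
    rw [hS]
    exact ⟨1, by simp; omega⟩
  have step2 : ∑ n ∈ S, 2 * F n < ∑ n ∈ S, (G n + G (sig N a n)) := by
    apply Finset.sum_lt_sum_of_nonempty hne
    intro n hn
    have h1 := hXrange n hn
    have h2 := hXrange (sig N a n) (sig_mem a hN ha hn)
    have hcore := core h1.1 h1.2 h2.1 h2.2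
    have hGn : G n + G (sig N a n) = (1 / Real.sin (X n) ^ 2) * (1 - Real.log (2 * Real.sin (X (sig N a n))))
        + (1 / Real.sin (X (sig N a n)) ^ 2) * (1 - Real.log (2 * Real.sin (X n))) := by
      rw [hG]
      simp only []
      rw [sig_invol a hN ha2 hn]
    rw [hGn, hF]
    exact hcore
  have step3 : ∑ n ∈ S, F n < ∑ n ∈ S, G n := by
    have e1 : ∑ n ∈ S, 2 * F n = 2 * ∑ n ∈ S, F n := by rw [Finset.mul_sum]
    have e2 : ∑ n ∈ S, (G n + G (sig N a n)) = 2 * ∑ n ∈ S, G n := by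
      rw [Finset.sum_add_distrib, hreindex]; ring
    rw [e1, e2] at step2
    linarith
  calc |∑ n ∈ S, Real.cot (X n) * Real.cot (X (sig N a n))| ≤ ∑ n ∈ S, F n := step1
    _ < ∑ n ∈ S, G n := step3
end

section
/- For all real numbers x, y with 0 < x < 1 and 0 < y < 1, one has the strict inequality 2 |cot(πx) cot(πy)| < (1 − log(2 sin(πx))) / sin²(πy) + (1 − log(2 sin(πy))) / sin²(πx). -/
/-- For all real `x, y` with `0 < x < 1` and `0 < y < 1`, one has the
strict inequality
`2 |cot(πx) cot(πy)| < (1 − log(2 sin(πx))) / sin²(πy) + (1 − log(2 sin(πy))) / sin²(πx)`. -/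
theorem stmt_5 (x y : ℝ) (hx0 : 0 < x) (hx1 : x < 1) (hy0 : 0 < y) (hy1 : y < 1) :
    2 * |Real.cot (Real.pi * x) * Real.cot (Real.pi * y)| <
      (1 - Real.log (2 * Real.sin (Real.pi * x))) / Real.sin (Real.pi * y) ^ 2 +
      (1 - Real.log (2 * Real.sin (Real.pi * y))) / Real.sin (Real.pi * x) ^ 2 := by
  have hπ := Real.pi_pos
  have hs : 0 < Real.sin (Real.pi * x) :=
    Real.sin_pos_of_pos_of_lt_pi (by positivity) (by nlinarith)
  have ht : 0 < Real.sin (Real.pi * y) :=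
    Real.sin_pos_of_pos_of_lt_pi (by positivity) (by nlinarith)
  have hlog : ∀ u : ℝ, 0 < u → Real.log (2 * u) < u ^ 2 := by
    intro u hu
    rcases eq_or_ne (2 * u) 1 with h | h
    · rw [h, Real.log_one]; positivity
    · have := Real.log_lt_sub_one_of_pos (by positivity) h
      nlinarith [sq_nonneg (u - 1)]
  have hA : Real.cos (Real.pi * x) ^ 2 < 1 - Real.log (2 * Real.sin (Real.pi * x)) := by
    have h1 := hlog _ hs
    nlinarith [Real.sin_sq_add_cos_sq (Real.pi * x)]
  have hB : Real.cos (Real.pi * y) ^ 2 < 1 - Real.log (2 * Real.sin (Real.pi * y)) := by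
    have h1 := hlog _ ht
    nlinarith [Real.sin_sq_add_cos_sq (Real.pi * y)]
  rw [Real.cot_eq_cos_div_sin, Real.cot_eq_cos_div_sin,
    div_add_div _ _ (pow_ne_zero 2 ht.ne') (pow_ne_zero 2 hs.ne'),
    lt_div_iff₀ (by positivity)]
  have habs : |Real.cos (Real.pi * x) / Real.sin (Real.pi * x) *
      (Real.cos (Real.pi * y) / Real.sin (Real.pi * y))| =
      |Real.cos (Real.pi * x)| * |Real.cos (Real.pi * y)| /
        (Real.sin (Real.pi * x) * Real.sin (Real.pi * y)) := by
    rw [abs_mul, abs_div, abs_div, abs_of_pos hs, abs_of_pos ht]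
    ring
  rw [habs]
  have hkey : 2 * (|Real.cos (Real.pi * x)| * |Real.cos (Real.pi * y)| /
      (Real.sin (Real.pi * x) * Real.sin (Real.pi * y))) *
      (Real.sin (Real.pi * y) ^ 2 * Real.sin (Real.pi * x) ^ 2) =
      2 * (|Real.cos (Real.pi * x)| * |Real.cos (Real.pi * y)|) *
      (Real.sin (Real.pi * x) * Real.sin (Real.pi * y)) := by
    field_simp
  rw [hkey]
  have hax := abs_nonneg (Real.cos (Real.pi * x))
  have hay := abs_nonneg (Real.cos (Real.pi * y))
  have h1 : |Real.cos (Real.pi * x)| ^ 2 = Real.cos (Real.pi * x) ^ 2 := sq_abs _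
  have h2 : |Real.cos (Real.pi * y)| ^ 2 = Real.cos (Real.pi * y) ^ 2 := sq_abs _
  have hA' := mul_lt_mul_of_pos_right hA (by positivity : (0:ℝ) < Real.sin (Real.pi * x) ^ 2)
  have hB' := mul_lt_mul_of_pos_right hB (by positivity : (0:ℝ) < Real.sin (Real.pi * y) ^ 2)
  have hsq := sq_nonneg (|Real.cos (Real.pi * x)| * Real.sin (Real.pi * x) -
      |Real.cos (Real.pi * y)| * Real.sin (Real.pi * y))
  have h1' : |Real.cos (Real.pi * x)| ^ 2 * Real.sin (Real.pi * x) ^ 2 =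
      Real.cos (Real.pi * x) ^ 2 * Real.sin (Real.pi * x) ^ 2 := by rw [h1]
  have h2' : |Real.cos (Real.pi * y)| ^ 2 * Real.sin (Real.pi * y) ^ 2 =
      Real.cos (Real.pi * y) ^ 2 * Real.sin (Real.pi * y) ^ 2 := by rw [h2]
  nlinarith [hA', hB', hsq, h1', h2']
end

section
/- For all real x with 0 < x ≤ 1/2, one has the strict inequality cos²(πx) < 1 − log(2 sin(πx)). -/
open Real

theorem Real.log_two_mul_lt_sq {s : ℝ} (hs : 0 < s) : log (2 * s) < s ^ 2 := by
  rcases eq_or_ne (2 * s) 1 with h | h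
  · rw [h, log_one]
    positivity
  · calc log (2 * s) < 2 * s - 1 := log_lt_sub_one_of_pos (by positivity) h
      _ ≤ s ^ 2 := by nlinarith [sq_nonneg (s - 1)]

/-- For all real `x` with `0 < x ≤ 1/2`, one has the strict inequality
`cos²(πx) < 1 − log(2 sin(πx))`. -/
theorem stmt_6 (x : ℝ) (hx0 : 0 < x) (hx1 : x ≤ 1 / 2) :
    Real.cos (Real.pi * x) ^ 2 < 1 - Real.log (2 * Real.sin (Real.pi * x)) := by
  have hsin : 0 < sin (π * x) :=
    sin_pos_of_pos_of_lt_pi (by positivity) (by nlinarith [pi_pos])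
  rw [cos_sq']
  linarith [log_two_mul_lt_sq hsin]
end

section
/- There is a universal constant C > 0 such that for every real x with 0 < x < 1 and every positive integer n, the partial sum satisfies Σ_{k=1}^n cos(2πkx)/k ≤ C · (1 − log(sin(πx))). -/
open Real Finset

/-- Telescoping Dirichlet-kernel bound. -/
lemma stmt8_dirichlet {x : ℝ} (hs : 0 < Real.sin (Real.pi * x)) (m : ℕ) :
    |∑ k ∈ Finset.Icc 1 m, Real.cos (2 * Real.pi * k * x)| ≤ 1 / Real.sin (Real.pi * x) := by
  set s := Real.sin (Real.pi * x) with hsdef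
  have key : ∑ k ∈ Finset.Icc 1 m, Real.cos (2 * Real.pi * k * x)
      = Real.sin ((2 * m + 1) * (Real.pi * x)) / (2 * s)
        - Real.sin ((2 * (0:ℕ) + 1) * (Real.pi * x)) / (2 * s) := by
    have hIcc : Finset.Icc 1 m = Finset.Ico 1 (m + 1) := by
      rw [Finset.Ico_add_one_right_eq_Icc]
    rw [hIcc, Finset.sum_Ico_eq_sum_range]
    have := Finset.sum_range_sub
      (fun k : ℕ => Real.sin ((2 * k + 1) * (Real.pi * x)) / (2 * s)) m
    rw [← this]
    apply Finset.sum_congr rfl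
    intro j _
    have h1 := Real.sin_add (2 * Real.pi * ((j : ℝ) + 1) * x) (Real.pi * x)
    have h2 := Real.sin_sub (2 * Real.pi * ((j : ℝ) + 1) * x) (Real.pi * x)
    have e1 : ((2 * ((j:ℝ) + 1) + 1) * (Real.pi * x)) = 2 * Real.pi * ((j:ℝ) + 1) * x + Real.pi * x := by ring
    have e2 : ((2 * (j:ℝ) + 1) * (Real.pi * x)) = 2 * Real.pi * ((j:ℝ) + 1) * x - Real.pi * x := by ring
    have key2 : Real.sin ((2 * ((j:ℝ) + 1) + 1) * (Real.pi * x))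
        - Real.sin ((2 * (j:ℝ) + 1) * (Real.pi * x))
        = 2 * Real.cos (2 * Real.pi * ((j:ℝ) + 1) * x) * s := by
      rw [e1, e2, h1, h2]; ring
    have hcast : (2 * Real.pi * ((1:ℕ) + j : ℕ) * x) = 2 * Real.pi * ((j:ℝ) + 1) * x := by
      push_cast; ring
    rw [hcast]
    field_simp
    push_cast; ring_nf at key2 ⊢
    nlinarith [key2]
  rw [key]
  simp only [Nat.cast_zero, mul_zero, zero_add, one_mul]
  rw [div_sub_div_same, abs_div]
  rw [abs_of_pos (by positivity : (0:ℝ) < 2 * s)]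
  rw [div_le_div_iff₀ (by positivity) hs]
  have h1 : |Real.sin ((2 * m + 1) * (Real.pi * x)) - Real.sin (Real.pi * x)| ≤ 2 := by
    calc |Real.sin ((2 * m + 1) * (Real.pi * x)) - Real.sin (Real.pi * x)|
        ≤ |Real.sin ((2 * m + 1) * (Real.pi * x))| + |Real.sin (Real.pi * x)| := abs_sub _ _
      _ ≤ 1 + 1 := add_le_add (Real.abs_sin_le_one _) (Real.abs_sin_le_one _)
      _ = 2 := by norm_num
  nlinarith

/-- There is a universal constant `C > 0` such that for every real `x` with
`0 < x < 1` and every positive integer `n`,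
`Σ_{k=1}^n cos(2πkx)/k ≤ C · (1 − log(sin(πx)))`. -/
theorem stmt_8 :
    ∃ C : ℝ, 0 < C ∧ ∀ x : ℝ, 0 < x → x < 1 → ∀ n : ℕ, 1 ≤ n →
      ∑ k ∈ Finset.Icc 1 n, Real.cos (2 * Real.pi * k * x) / k ≤
        C * (1 - Real.log (Real.sin (Real.pi * x))) := by
  refine ⟨4, by norm_num, ?_⟩
  intro x hx0 hx1 n hn
  set s := Real.sin (Real.pi * x) with hsdef
  have hpi := Real.pi_pos
  have hs : 0 < s := Real.sin_pos_of_pos_of_lt_pi (by positivity) (by nlinarith)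
  have hs1 : s ≤ 1 := Real.sin_le_one _
  have hlog : Real.log s ≤ 0 := Real.log_nonpos hs.le hs1
  set S : ℕ → ℝ := fun m => ∑ k ∈ Finset.Icc 1 m, Real.cos (2 * Real.pi * k * x) with hSdef
  have hSb : ∀ m, |S m| ≤ 1 / s := fun m => stmt8_dirichlet hs m
  set N : ℕ := ⌈1 / s⌉₊ with hNdef
  have hsinv1 : (1:ℝ) ≤ 1 / s := one_le_one_div hs hs1
  have hN1 : 1 ≤ N := by
    rw [hNdef]; exact Nat.one_le_ceil_iff.mpr (by linarith)
  have hNr : (1:ℝ) ≤ N := by exact_mod_cast hN1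
  have hNge : 1 / s ≤ N := Nat.le_ceil _
  have hNle : (N:ℝ) ≤ 2 / s := by
    have h := Nat.ceil_lt_add_one (by positivity : (0:ℝ) ≤ 1 / s)
    have h2 : 2 / s = 1 / s + 1 / s := by ring
    rw [h2]; rw [hNdef]; linarith
  -- harmonic bound
  have hharm : ∀ m : ℕ, 1 ≤ m → ∑ k ∈ Finset.Icc 1 m, (k:ℝ)⁻¹ ≤ 1 + Real.log m := by
    intro m hm
    have := harmonic_le_one_add_log m
    have heq : ((harmonic m : ℚ) : ℝ) = ∑ k ∈ Finset.Icc 1 m, (k:ℝ)⁻¹ := by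
      rw [harmonic_eq_sum_Icc]; push_cast; rfl
    rw [← heq]
    exact_mod_cast this
  -- head bound for any m ≤ N
  have hhead : ∀ m : ℕ, 1 ≤ m → m ≤ N →
      ∑ k ∈ Finset.Icc 1 m, Real.cos (2 * Real.pi * k * x) / k ≤ 1 + Real.log 2 - Real.log s := by
    intro m hm hmN
    have h1 : ∑ k ∈ Finset.Icc 1 m, Real.cos (2 * Real.pi * k * x) / k
        ≤ ∑ k ∈ Finset.Icc 1 m, (k:ℝ)⁻¹ := by
      apply Finset.sum_le_sum
      intro k hk
      rw [Finset.mem_Icc] at hk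
      have hk0 : (0:ℝ) < k := by exact_mod_cast hk.1
      rw [div_eq_mul_inv]
      calc Real.cos (2 * Real.pi * k * x) * (k:ℝ)⁻¹ ≤ 1 * (k:ℝ)⁻¹ := by
            apply mul_le_mul_of_nonneg_right (Real.cos_le_one _) (by positivity)
        _ = (k:ℝ)⁻¹ := one_mul _
    have h2 := hharm m hm
    have h3 : Real.log m ≤ Real.log N := by
      apply Real.log_le_log (by exact_mod_cast hm)
      exact_mod_cast hmN
    have h4 : Real.log N ≤ Real.log (2 / s) := by
      apply Real.log_le_log (by positivity) hNle
    have h5 : Real.log (2 / s) = Real.log 2 - Real.log s :=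
      Real.log_div (by norm_num) (ne_of_gt hs)
    linarith
  -- tail bound via Abel summation (induction)
  have htail : ∀ m : ℕ, N ≤ m →
      |∑ k ∈ Finset.Ioc N m, Real.cos (2 * Real.pi * k * x) / k - (S m - S N) / m|
        ≤ 2 / s * (1 / N - 1 / m) := by
    intro m hm
    induction m, hm using Nat.le_induction with
    | base => simp
    | succ p hp ih =>
      have hp1 : (1:ℝ) ≤ p := le_trans hNr (by exact_mod_cast hp)
      have hp0 : (0:ℝ) < p := by linarith
      have hp0' : (0:ℝ) < (p:ℝ) + 1 := by linarith
      rw [Finset.sum_Ioc_succ_top hp]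
      have hSstep : S (p + 1) = S p + Real.cos (2 * Real.pi * (p + 1 : ℕ) * x) := by
        rw [hSdef]
        simp only
        rw [← Finset.Ico_add_one_right_eq_Icc, Finset.sum_Ico_succ_top (by omega : 1 ≤ p + 1),
            Finset.Ico_add_one_right_eq_Icc]
      have hrw : ∑ k ∈ Finset.Ioc N p, Real.cos (2 * Real.pi * k * x) / k
            + Real.cos (2 * Real.pi * (p + 1 : ℕ) * x) / (p + 1 : ℕ)
            - (S (p + 1) - S N) / (p + 1 : ℕ)
          = (∑ k ∈ Finset.Ioc N p, Real.cos (2 * Real.pi * k * x) / k - (S p - S N) / p)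
            + (S p - S N) * (1 / p - 1 / ((p:ℝ) + 1)) := by
        rw [hSstep]
        set T := ∑ k ∈ Finset.Ioc N p, Real.cos (2 * Real.pi * k * x) / k with hT
        push_cast
        field_simp
        ring
      rw [hrw]
      have hb1 : |S p - S N| ≤ 2 / s := by
        calc |S p - S N| ≤ |S p| + |S N| := abs_sub _ _
          _ ≤ 1 / s + 1 / s := add_le_add (hSb p) (hSb N)
          _ = 2 / s := by ring
      have hmono : (0:ℝ) ≤ 1 / p - 1 / ((p:ℝ) + 1) := by
        rw [sub_nonneg]
        apply one_div_le_one_div_of_le hp0 (by linarith)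
      calc |(∑ k ∈ Finset.Ioc N p, Real.cos (2 * Real.pi * k * x) / k - (S p - S N) / p)
            + (S p - S N) * (1 / p - 1 / ((p:ℝ) + 1))|
          ≤ |∑ k ∈ Finset.Ioc N p, Real.cos (2 * Real.pi * k * x) / k - (S p - S N) / p|
            + |(S p - S N) * (1 / p - 1 / ((p:ℝ) + 1))| := abs_add_le _ _
        _ ≤ 2 / s * (1 / N - 1 / p) + 2 / s * (1 / p - 1 / ((p:ℝ) + 1)) := by
            refine add_le_add ih ?_
            rw [abs_mul, abs_of_nonneg hmono]
            exact mul_le_mul_of_nonneg_right hb1 hmono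
        _ = 2 / s * (1 / N - 1 / ((p:ℝ) + 1)) := by ring
        _ = 2 / s * (1 / N - 1 / ((p + 1 : ℕ) : ℝ)) := by push_cast; ring
  -- combine
  have hfinal : ∑ k ∈ Finset.Icc 1 n, Real.cos (2 * Real.pi * k * x) / k
      ≤ 3 + Real.log 2 - Real.log s := by
    rcases le_or_gt n N with hnN | hNn
    · have := hhead n hn hnN
      linarith
    · have hNn' : N ≤ n := hNn.le
      have hsplit : ∑ k ∈ Finset.Icc 1 n, Real.cos (2 * Real.pi * k * x) / k
          = ∑ k ∈ Finset.Icc 1 N, Real.cos (2 * Real.pi * k * x) / k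
            + ∑ k ∈ Finset.Ioc N n, Real.cos (2 * Real.pi * k * x) / k := by
        rw [show Finset.Icc 1 n = Finset.Ioc 0 n by rw [← Finset.Icc_add_one_left_eq_Ioc, zero_add],
            show Finset.Icc 1 N = Finset.Ioc 0 N by rw [← Finset.Icc_add_one_left_eq_Ioc, zero_add],
            Finset.sum_Ioc_consecutive _ (Nat.zero_le N) hNn']
      have hhd := hhead N hN1 le_rfl
      have htl := htail n hNn'
      have hn0 : (0:ℝ) < n := by
        have : (N:ℝ) < n := by exact_mod_cast hNn
        linarith
      have htl2 : ∑ k ∈ Finset.Ioc N n, Real.cos (2 * Real.pi * k * x) / k ≤ 2 := by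
        have h1 : ∑ k ∈ Finset.Ioc N n, Real.cos (2 * Real.pi * k * x) / k
            ≤ 2 / s * (1 / N - 1 / n) + (S n - S N) / n := by
          have := abs_le.mp htl
          linarith [this.2]
        have hdiff : S n - S N ≤ 2 / s := by
          have h2s : 2 / s = 1 / s + 1 / s := by ring
          rw [h2s]
          linarith [(abs_le.mp (hSb n)).2, (abs_le.mp (hSb N)).1]
        have h2 : (S n - S N) / n ≤ 2 / s / n := by gcongr
        have h3 : 2 / s * (1 / N - 1 / n) + 2 / s / n = 2 / s * (1 / N) := by
          ring
        have h4 : 2 / s * (1 / N) ≤ 2 := by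
          rw [mul_one_div, div_div]
          rw [div_le_iff₀ (by positivity)]
          have : 1 ≤ s * N := by
            have := hNge
            rw [div_le_iff₀ hs] at this
            · linarith [this]
          nlinarith
        linarith
      linarith
  have hlog2 : Real.log 2 ≤ 1 := by
    have := Real.log_le_sub_one_of_pos (by norm_num : (0:ℝ) < 2)
    linarith
  nlinarith [hfinal, hlog, hlog2]
end

section
/- Let g(x) = 1 − log(2 sin(πx)) for 0 < x < 1. Then g is integrable on (0,1) with ∫_0^1 g(x) dx = 1, and for every integer k ≥ 1 one has ∫_0^1 g(x) cos(2πkx) dx = 1/(2k) and ∫_0^1 g(x) sin(2πkx) dx = 0. -/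
open MeasureTheory

open MeasureTheory Real Filter Set
open scoped Interval

lemma logII_pos {b : ℝ} (hb : 0 ≤ b) : IntervalIntegrable Real.log volume 0 b := by
  rw [intervalIntegrable_iff_integrableOn_Ioc_of_le hb]
  have hg : IntegrableOn (fun x : ℝ => 2 * x ^ (-(1/2) : ℝ) + x) (Ioc 0 b) volume := by
    have h1 : IntervalIntegrable (fun x : ℝ => x ^ (-(1/2) : ℝ)) volume 0 b :=
      intervalIntegral.intervalIntegrable_rpow' (by norm_num)
    have := (h1.const_mul 2).add ((continuous_id.intervalIntegrable 0 b))
    rw [intervalIntegrable_iff_integrableOn_Ioc_of_le hb] at this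
    exact this
  refine Integrable.mono' hg Real.measurable_log.aestronglyMeasurable ?_
  rw [ae_restrict_iff' measurableSet_Ioc]
  filter_upwards with x hx
  obtain ⟨hx0, hxb⟩ := hx
  rcases le_or_gt x 1 with h1 | h1
  · have hlog : Real.log x ≤ 0 := Real.log_nonpos hx0.le h1
    have : -Real.log x ≤ 2 * x ^ (-(1/2) : ℝ) := by
      have h2 : Real.log (x ^ (-(1/2) : ℝ)) = -(1/2) * Real.log x := Real.log_rpow hx0 _
      have h3 : Real.log (x ^ (-(1/2) : ℝ)) ≤ x ^ (-(1/2) : ℝ) - 1 :=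
        Real.log_le_sub_one_of_pos (Real.rpow_pos_of_pos hx0 _)
      nlinarith [Real.rpow_pos_of_pos hx0 (-(1/2) : ℝ)]
    have : ‖Real.log x‖ ≤ 2 * x ^ (-(1/2) : ℝ) := by
      rw [Real.norm_eq_abs, abs_of_nonpos hlog]; exact this
    linarith [hx0.le]
  · have hlog : 0 ≤ Real.log x := Real.log_nonneg h1.le
    have h3 : Real.log x ≤ x - 1 := Real.log_le_sub_one_of_pos hx0
    have : ‖Real.log x‖ ≤ x := by rw [Real.norm_eq_abs, abs_of_nonneg hlog]; linarith
    have := Real.rpow_pos_of_pos hx0 (-(1/2) : ℝ)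
    linarith

lemma logII (a b : ℝ) : IntervalIntegrable Real.log volume a b := by
  have key : ∀ c : ℝ, IntervalIntegrable Real.log volume 0 c := by
    intro c
    rcases le_or_gt 0 c with hc | hc
    · exact logII_pos hc
    · refine IntervalIntegrable.symm ?_
      have h := (IntervalIntegrable.iff_comp_neg (by simp)).mp (logII_pos (b := -c) (by linarith))
      simp only [neg_zero, neg_neg] at h
      refine h.symm.congr ?_
      exact fun x _ => Real.log_neg_eq_log x
  exact (key a).symm.trans (key b)

noncomputable def LL (r x : ℝ) : ℝ :=
  Real.log ((norm : ℂ → ℝ) (1 - (r : ℂ) * Complex.exp ((2 * π * x : ℝ) * Complex.I)))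

lemma sq_abs_eq (r θ : ℝ) :
    ((norm : ℂ → ℝ) (1 - (r : ℂ) * Complex.exp ((θ : ℝ) * Complex.I))) ^ 2
      = 1 - 2 * r * Real.cos θ + r ^ 2 := by
  rw [Complex.sq_norm]
  have h : ((θ : ℂ) * Complex.I) = (θ : ℝ) * Complex.I := rfl
  rw [Complex.normSq_apply]
  simp [Complex.exp_ofReal_mul_I_re, Complex.exp_ofReal_mul_I_im, Complex.sub_re, Complex.sub_im,
    Complex.mul_re, Complex.mul_im]
  nlinarith [Real.sin_sq_add_cos_sq θ]

lemma abs_le_two {r : ℝ} (hr : |r| ≤ 1) (θ : ℝ) :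
    (norm : ℂ → ℝ) (1 - (r : ℂ) * Complex.exp ((θ : ℝ) * Complex.I)) ≤ 2 := by
  calc (norm : ℂ → ℝ) (1 - (r : ℂ) * Complex.exp ((θ : ℝ) * Complex.I))
      ≤ (norm : ℂ → ℝ) 1 + (norm : ℂ → ℝ) ((r : ℂ) * Complex.exp ((θ : ℝ) * Complex.I)) :=
        norm_sub_le _ _
    _ ≤ 2 := by
        rw [norm_mul, Complex.norm_exp_ofReal_mul_I, norm_one, Complex.norm_real, Real.norm_eq_abs]
        linarith

lemma abs_ge_sin (r θ : ℝ) :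
    |Real.sin θ| ≤ (norm : ℂ → ℝ) (1 - (r : ℂ) * Complex.exp ((θ : ℝ) * Complex.I)) := by
  have h1 : |Real.sin θ| ^ 2 ≤ ((norm : ℂ → ℝ) (1 - (r : ℂ) * Complex.exp ((θ : ℝ) * Complex.I))) ^ 2 := by
    rw [sq_abs_eq, _root_.sq_abs]
    nlinarith [Real.sin_sq_add_cos_sq θ, sq_nonneg (r - Real.cos θ)]
  have h0 : (0:ℝ) ≤ (norm : ℂ → ℝ) (1 - (r : ℂ) * Complex.exp ((θ : ℝ) * Complex.I)) :=
    norm_nonneg _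
  nlinarith [abs_nonneg (Real.sin θ)]

lemma abs_one_sub_exp {x : ℝ} (hx : x ∈ Ioo (0:ℝ) 1) :
    (norm : ℂ → ℝ) (1 - Complex.exp ((2 * π * x : ℝ) * Complex.I)) = 2 * Real.sin (π * x) := by
  have hsin : 0 < Real.sin (π * x) :=
    Real.sin_pos_of_pos_of_lt_pi (mul_pos Real.pi_pos hx.1) (by nlinarith [Real.pi_pos, hx.2, hx.1])
  have h1 : ((norm : ℂ → ℝ) (1 - Complex.exp ((2 * π * x : ℝ) * Complex.I))) ^ 2
      = (2 * Real.sin (π * x)) ^ 2 := by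
    have := sq_abs_eq 1 (2 * π * x)
    simp only [Complex.ofReal_one, one_mul] at this
    rw [this]
    have hc : Real.cos (2 * π * x) = 1 - 2 * Real.sin (π * x) ^ 2 := by
      have : 2 * π * x = 2 * (π * x) := by ring
      rw [this, Real.cos_two_mul]
      nlinarith [Real.sin_sq_add_cos_sq (π * x)]
    rw [hc]; ring
  have h2 : (0:ℝ) ≤ (norm : ℂ → ℝ) (1 - Complex.exp ((2 * π * x : ℝ) * Complex.I)) :=
    norm_nonneg _
  nlinarith [h1, h2, hsin]

lemma LL_one {x : ℝ} (hx : x ∈ Ioo (0:ℝ) 1) :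
    LL 1 x = Real.log (2 * Real.sin (π * x)) := by
  unfold LL
  rw [Complex.ofReal_one, one_mul, abs_one_sub_exp hx]

lemma sin_lb {x : ℝ} (hx : x ∈ Ioo (0:ℝ) 1) : x * (1 - x) ≤ Real.sin (π * x) := by
  obtain ⟨h0, h1⟩ := hx
  rcases le_or_gt x (1/2) with h | h
  · have := Real.mul_le_sin (x := π * x) (by positivity)
      (by nlinarith [Real.pi_pos])
    have hpi := Real.pi_pos
    have : 2 * x ≤ Real.sin (π * x) := by
      rw [div_mul_eq_mul_div, mul_comm] at this
      calc 2 * x = π * x * 2 / π := by field_simp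
        _ ≤ _ := this
    nlinarith
  · have key : Real.sin (π * x) = Real.sin (π * (1 - x)) := by
      rw [show π * (1 - x) = π - π * x by ring, Real.sin_pi_sub]
    have := Real.mul_le_sin (x := π * (1 - x)) (by nlinarith [Real.pi_pos])
      (by nlinarith [Real.pi_pos])
    have hpi := Real.pi_pos
    have h2 : 2 * (1 - x) ≤ Real.sin (π * (1 - x)) := by
      rw [div_mul_eq_mul_div, mul_comm] at this
      calc 2 * (1 - x) = π * (1 - x) * 2 / π := by field_simp
        _ ≤ _ := this
    rw [key]; nlinarith

lemma cos_lb {x : ℝ} (hx : x ∈ Ioo (0:ℝ) 1) : 2 * |x - 1/2| ≤ |Real.cos (π * x)| := by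
  obtain ⟨h0, h1⟩ := hx
  have hpi := Real.pi_pos
  have key : Real.cos (π * x) = Real.sin (π * (1/2 - x)) := by
    rw [show π * (1/2 - x) = π/2 - π * x by ring, Real.sin_pi_div_two_sub]
  rw [key]
  have habs : |Real.sin (π * (1/2 - x))| = Real.sin (π * |1/2 - x|) := by
    rcases le_or_gt 0 (1/2 - x) with h | h
    · rw [abs_of_nonneg h, abs_of_nonneg]
      exact Real.sin_nonneg_of_nonneg_of_le_pi (by positivity) (by nlinarith)
    · rw [abs_of_neg h, abs_of_nonpos, ← Real.sin_neg, mul_neg]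
      refine Real.sin_nonpos_of_nonpos_of_neg_pi_le ?_ ?_ <;> nlinarith
  rw [habs]
  have hle : π * |1/2 - x| ≤ π / 2 := by
    have : |1/2 - x| ≤ 1/2 := abs_le.2 ⟨by linarith, by linarith⟩
    nlinarith
  have := Real.mul_le_sin (x := π * |1/2 - x|) (by positivity) hle
  have h2 : 2 * |1/2 - x| ≤ Real.sin (π * |1/2 - x|) := by
    rw [div_mul_eq_mul_div, mul_comm] at this
    calc 2 * |1/2 - x| = π * |1/2 - x| * 2 / π := by field_simp
      _ ≤ _ := this
  rw [abs_sub_comm x (1/2)]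
  exact h2

noncomputable def G (x : ℝ) : ℝ :=
  Real.log 2 + (-Real.log x - Real.log (1 - x)) + -Real.log (x - 1/2)

lemma G_nonneg_parts {x : ℝ} (hx : x ∈ Ioo (0:ℝ) 1) :
    0 ≤ -Real.log x ∧ 0 ≤ -Real.log (1 - x) ∧ 0 ≤ -Real.log (x - 1/2) := by
  obtain ⟨h0, h1⟩ := hx
  refine ⟨by simpa using Real.log_nonpos h0.le h1.le,
    by simpa using Real.log_nonpos (by linarith) (by linarith), ?_⟩
  rw [← Real.log_abs]
  have : |x - 1/2| ≤ 1 := abs_le.2 ⟨by linarith, by linarith⟩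
  simpa using Real.log_nonpos (abs_nonneg _) this

lemma LL_bound {r : ℝ} (hr : |r| ≤ 1) {x : ℝ} (hx : x ∈ Ioo (0:ℝ) 1) (hne : x ≠ 1/2) :
    |LL r x| ≤ G x := by
  obtain ⟨h0, h1⟩ := hx
  set A := (norm : ℂ → ℝ) (1 - (r : ℂ) * Complex.exp ((2 * π * x : ℝ) * Complex.I)) with hA
  have hsin : 0 < Real.sin (π * x) := Real.sin_pos_of_pos_of_lt_pi (mul_pos Real.pi_pos h0)
    (by nlinarith [Real.pi_pos])
  have hcos : 0 < |Real.cos (π * x)| := by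
    have := cos_lb ⟨h0, h1⟩
    have hne' : x - 1/2 ≠ 0 := sub_ne_zero.2 hne
    have : 0 < |x - 1/2| := abs_pos.2 hne'
    linarith [cos_lb (show x ∈ Ioo (0:ℝ) 1 from ⟨h0, h1⟩)]
  have hs2 : |Real.sin (2 * π * x)| = 2 * Real.sin (π * x) * |Real.cos (π * x)| := by
    rw [show (2:ℝ) * π * x = 2 * (π * x) by ring, Real.sin_two_mul, abs_mul, abs_mul]
    rw [abs_of_nonneg (by norm_num : (0:ℝ) ≤ 2), abs_of_nonneg hsin.le]
  have hs2pos : 0 < |Real.sin (2 * π * x)| := by rw [hs2]; positivity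
  have hAlow : |Real.sin (2 * π * x)| ≤ A := abs_ge_sin r (2 * π * x)
  have hApos : 0 < A := lt_of_lt_of_le hs2pos hAlow
  have hAhigh : A ≤ 2 := abs_le_two hr _
  obtain ⟨hp1, hp2, hp3⟩ := G_nonneg_parts ⟨h0, h1⟩
  have hlog2 : (0:ℝ) ≤ Real.log 2 := Real.log_nonneg (by norm_num)
  rw [abs_le]
  constructor
  · -- -G x ≤ LL r x : i.e. -LL ≤ G
    have hmono : Real.log |Real.sin (2 * π * x)| ≤ Real.log A := Real.log_le_log hs2pos hAlow
    -- lower bound for |sin 2πx|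
    have hprod : 4 * (x * (1 - x)) * |x - 1/2| ≤ |Real.sin (2 * π * x)| := by
      rw [hs2]
      have hsl := sin_lb (show x ∈ Ioo (0:ℝ) 1 from ⟨h0, h1⟩)
      have hcl := cos_lb (show x ∈ Ioo (0:ℝ) 1 from ⟨h0, h1⟩)
      nlinarith [abs_nonneg (x - 1/2), abs_nonneg (Real.cos (π * x)), mul_pos h0 (by linarith : (0:ℝ) < 1 - x)]
    have hxpos : (0:ℝ) < x * (1 - x) := mul_pos h0 (by linarith)
    have habs : (0:ℝ) < |x - 1/2| := abs_pos.2 (sub_ne_zero.2 hne)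
    have hmono2 : Real.log (4 * (x * (1 - x)) * |x - 1/2|) ≤ Real.log |Real.sin (2 * π * x)| :=
      Real.log_le_log (by positivity) hprod
    have hexpand : Real.log (4 * (x * (1 - x)) * |x - 1/2|)
        = Real.log 4 + (Real.log x + Real.log (1 - x)) + Real.log (x - 1/2) := by
      rw [Real.log_mul (by positivity) habs.ne', Real.log_mul (by norm_num) hxpos.ne',
        Real.log_mul h0.ne' (by linarith : (1:ℝ) - x ≠ 0), Real.log_abs]
    have hlog4 : (0:ℝ) ≤ Real.log 4 := Real.log_nonneg (by norm_num)
    unfold LL G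
    rw [← hA]
    nlinarith [hmono, hmono2, hexpand]
  · -- LL ≤ G
    have : Real.log A ≤ Real.log 2 := Real.log_le_log hApos hAhigh
    unfold LL G
    rw [← hA]
    linarith

lemma logint1 : IntegrableOn (fun x : ℝ => Real.log x) (Ioo (0:ℝ) 1) volume := by
  have h := (intervalIntegrable_iff_integrableOn_Ioc_of_le (by norm_num : (0:ℝ) ≤ 1)).1 (logII 0 1)
  exact h.mono_set Ioo_subset_Ioc_self

lemma logint2 : IntegrableOn (fun x : ℝ => Real.log (1 - x)) (Ioo (0:ℝ) 1) volume := by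
  have h := ((logII 0 1).comp_sub_left 1).symm
  simp only [sub_zero, sub_self] at h
  exact ((intervalIntegrable_iff_integrableOn_Ioc_of_le (by norm_num : (0:ℝ) ≤ 1)).1 h).mono_set
    Ioo_subset_Ioc_self

lemma logint3 : IntegrableOn (fun x : ℝ => Real.log (x - 1/2)) (Ioo (0:ℝ) 1) volume := by
  have h := (logII (-(1/2)) (1/2)).comp_sub_right (1/2)
  have h' : IntervalIntegrable (fun x : ℝ => Real.log (x - 1/2)) volume 0 1 := by
    convert h using 2 <;> norm_num
  exact ((intervalIntegrable_iff_integrableOn_Ioc_of_le (by norm_num : (0:ℝ) ≤ 1)).1 h').mono_set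
    Ioo_subset_Ioc_self

lemma G_int : IntegrableOn G (Ioo (0:ℝ) 1) volume := by
  unfold G
  refine (((integrableOn_const ?_).add ((logint1.neg).sub logint2)).add logint3.neg)
  simp [Real.volume_Ioo]

lemma LL_meas (r : ℝ) : Measurable (LL r) := by
  unfold LL
  apply Real.measurable_log.comp
  apply continuous_norm.measurable.comp
  fun_prop

lemma hasSum_LL {r : ℝ} (hr0 : 0 ≤ r) (hr1 : r < 1) (x : ℝ) :
    HasSum (fun n : ℕ => r ^ n * Real.cos (2 * π * n * x) / n) (-(LL r x)) := by
  set z : ℂ := (r : ℂ) * Complex.exp ((2 * π * x : ℝ) * Complex.I) with hz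
  have hznorm : ‖z‖ < 1 := by
    rw [hz, norm_mul, Complex.norm_exp_ofReal_mul_I, mul_one, Complex.norm_real,
      Real.norm_eq_abs, abs_of_nonneg hr0]
    exact hr1
  have h := Complex.hasSum_re (Complex.hasSum_taylorSeries_neg_log hznorm)
  have hre : ∀ n : ℕ, (z ^ n / (n : ℂ)).re = r ^ n * Real.cos (2 * π * n * x) / n := by
    intro n
    have hzn : z ^ n = ((r ^ n : ℝ) : ℂ) * Complex.exp ((2 * π * n * x : ℝ) * Complex.I) := by
      rw [hz, mul_pow, ← Complex.exp_nat_mul]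
      push_cast
      ring_nf
    rw [show ((n : ℂ)) = ((n : ℝ) : ℂ) by push_cast; ring, Complex.div_ofReal_re, hzn]
    congr 1
    rw [Complex.re_ofReal_mul, Complex.exp_ofReal_mul_I_re]
  have hlre : (-Complex.log (1 - z)).re = -(LL r x) := by
    rw [Complex.neg_re, Complex.log_re]
    rfl
  rw [← hlre]
  exact h.congr_fun fun n => (hre n).symm

lemma int_cos_int (m : ℤ) :
    (∫ x in (0:ℝ)..1, Real.cos (2 * π * m * x)) = if m = 0 then 1 else 0 := by
  rcases eq_or_ne m 0 with h | h
  · simp [h]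
  · rw [if_neg h]
    have hm : (m:ℝ) ≠ 0 := Int.cast_ne_zero.2 h
    have hc : (2 * π * m : ℝ) ≠ 0 := by
      simp [Real.pi_ne_zero, hm]
    have key : (∫ x in (0:ℝ)..1, Real.cos ((2 * π * m) * x))
        = (2 * π * m : ℝ)⁻¹ • ∫ x in (0:ℝ)..(2 * π * m : ℝ), Real.cos x := by
      rw [intervalIntegral.integral_comp_mul_left Real.cos hc]
      norm_num
    rw [key, integral_cos]
    have : Real.sin (2 * π * m) = 0 := by
      have := Real.sin_int_mul_pi (2 * m)
      push_cast at this ⊢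
      rw [show (2:ℝ) * π * m = 2 * m * π by ring]
      have h2 := Real.sin_int_mul_pi (2 * m); rw [Int.cast_mul, Int.cast_ofNat] at h2; exact h2
    simp [this]

lemma int_sin_int (m : ℤ) :
    (∫ x in (0:ℝ)..1, Real.sin (2 * π * m * x)) = 0 := by
  rcases eq_or_ne m 0 with h | h
  · simp [h]
  · have hm : (m:ℝ) ≠ 0 := Int.cast_ne_zero.2 h
    have hc : (2 * π * m : ℝ) ≠ 0 := by simp [Real.pi_ne_zero, hm]
    have key : (∫ x in (0:ℝ)..1, Real.sin ((2 * π * m) * x))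
        = (2 * π * m : ℝ)⁻¹ • ∫ x in (0:ℝ)..(2 * π * m : ℝ), Real.sin x := by
      rw [intervalIntegral.integral_comp_mul_left Real.sin hc]
      norm_num
    rw [key, integral_sin]
    have : Real.cos (2 * π * m) = 1 := by
      have := Real.cos_int_mul_two_pi m
      rw [show (2:ℝ) * π * m = m * (2 * π) by ring]
      exact this
    simp [this]

lemma ioo_eq (f : ℝ → ℝ) : ∫ x in Ioo (0:ℝ) 1, f x = ∫ x in (0:ℝ)..1, f x := by
  rw [intervalIntegral.integral_of_le zero_le_one, integral_Ioc_eq_integral_Ioo]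

lemma cI_cos (n k : ℕ) (hk : 1 ≤ k) :
    (∫ x in Ioo (0:ℝ) 1, Real.cos (2*π*n*x) * Real.cos (2*π*k*x))
      = if n = k then 1/2 else 0 := by
  have hpt : ∀ x : ℝ, Real.cos (2*π*n*x) * Real.cos (2*π*k*x)
      = (Real.cos (2*π*(((n:ℤ)-k : ℤ):ℝ)*x) + Real.cos (2*π*(((n:ℤ)+k : ℤ):ℝ)*x))/2 := by
    intro x
    have h1 : (2*π*(((n:ℤ)-k:ℤ):ℝ)*x) = 2*π*n*x - 2*π*k*x := by push_cast; ring
    have h2 : (2*π*(((n:ℤ)+k:ℤ):ℝ)*x) = 2*π*n*x + 2*π*k*x := by push_cast; ring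
    rw [h1, h2, Real.cos_sub, Real.cos_add]; ring
  rw [ioo_eq]
  simp only [hpt]
  have i1 : IntervalIntegrable (fun x : ℝ => Real.cos (2*π*(((n:ℤ)-k : ℤ):ℝ)*x)) volume 0 1 :=
    (Real.continuous_cos.comp (by continuity)).intervalIntegrable 0 1
  have i2 : IntervalIntegrable (fun x : ℝ => Real.cos (2*π*(((n:ℤ)+k : ℤ):ℝ)*x)) volume 0 1 :=
    (Real.continuous_cos.comp (by continuity)).intervalIntegrable 0 1
  rw [intervalIntegral.integral_div, intervalIntegral.integral_add i1 i2,
    int_cos_int ((n:ℤ)-k), int_cos_int ((n:ℤ)+k)]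
  have hnk : ((n:ℤ)+k) ≠ 0 := by positivity
  rw [if_neg hnk]
  rcases eq_or_ne n k with h | h
  · rw [if_pos (by omega : (n:ℤ) - k = 0), if_pos h]; norm_num
  · rw [if_neg (by omega : ¬ ((n:ℤ) - k = 0)), if_neg h]; norm_num

lemma cI_sin (n k : ℕ) :
    (∫ x in Ioo (0:ℝ) 1, Real.cos (2*π*n*x) * Real.sin (2*π*k*x)) = 0 := by
  have hpt : ∀ x : ℝ, Real.cos (2*π*n*x) * Real.sin (2*π*k*x)
      = (Real.sin (2*π*(((n:ℤ)+k : ℤ):ℝ)*x) - Real.sin (2*π*(((n:ℤ)-k : ℤ):ℝ)*x))/2 := by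
    intro x
    have h1 : (2*π*(((n:ℤ)-k:ℤ):ℝ)*x) = 2*π*n*x - 2*π*k*x := by push_cast; ring
    have h2 : (2*π*(((n:ℤ)+k:ℤ):ℝ)*x) = 2*π*n*x + 2*π*k*x := by push_cast; ring
    rw [h1, h2, Real.sin_sub, Real.sin_add]; ring
  rw [ioo_eq]
  simp only [hpt]
  have i1 : IntervalIntegrable (fun x : ℝ => Real.sin (2*π*(((n:ℤ)+k : ℤ):ℝ)*x)) volume 0 1 :=
    (Real.continuous_sin.comp (by continuity)).intervalIntegrable 0 1
  have i2 : IntervalIntegrable (fun x : ℝ => Real.sin (2*π*(((n:ℤ)-k : ℤ):ℝ)*x)) volume 0 1 :=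
    (Real.continuous_sin.comp (by continuity)).intervalIntegrable 0 1
  rw [intervalIntegral.integral_div, intervalIntegral.integral_sub i1 i2,
    int_sin_int ((n:ℤ)+k), int_sin_int ((n:ℤ)-k)]
  norm_num

lemma cI_one (n : ℕ) (hn : 1 ≤ n) :
    (∫ x in Ioo (0:ℝ) 1, Real.cos (2*π*n*x)) = 0 := by
  rw [ioo_eq]
  have := int_cos_int (n : ℤ)
  rw [if_neg (by omega : (n:ℤ) ≠ 0)] at this
  exact_mod_cast this

lemma contIntOn {f : ℝ → ℝ} (hf : Continuous f) : IntegrableOn f (Ioo (0:ℝ) 1) volume :=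
  ((intervalIntegrable_iff_integrableOn_Ioc_of_le zero_le_one).1
    (hf.intervalIntegrable 0 1)).mono_set Ioo_subset_Ioc_self

lemma series_integral {r : ℝ} (hr0 : 0 ≤ r) (hr1 : r < 1) {φ : ℝ → ℝ}
    (hφc : Continuous φ) (hφb : ∀ x, |φ x| ≤ 1) :
    (∫ x in Ioo (0:ℝ) 1, LL r x * φ x)
      = -∑' n : ℕ, (r ^ n / n) * ∫ x in Ioo (0:ℝ) 1, Real.cos (2 * π * n * x) * φ x := by
  set F : ℕ → ℝ → ℝ := fun n x => -((r ^ n / n) * (Real.cos (2 * π * n * x) * φ x)) with hF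
  have hkey : ∀ x : ℝ, HasSum (fun n => F n x) (LL r x * φ x) := by
    intro x
    have h := ((hasSum_LL hr0 hr1 x).mul_right (φ x)).neg
    simp only [neg_mul, neg_neg] at h
    refine h.congr_fun fun n => ?_
    simp only [hF]; ring
  have hIntc : ∀ n : ℕ, Continuous (F n) := by
    intro n
    apply Continuous.neg
    exact continuous_const.mul ((Real.continuous_cos.comp (by continuity)).mul hφc)
  have hInt : ∀ n : ℕ, IntegrableOn (F n) (Ioo (0:ℝ) 1) volume := fun n => contIntOn (hIntc n)
  have hnormb : ∀ n : ℕ, ∀ x : ℝ, ‖F n x‖ ≤ r ^ n := by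
    intro n x
    have h1 : |Real.cos (2 * π * n * x) * φ x| ≤ 1 := by
      rw [abs_mul]
      exact mul_le_one₀ (Real.abs_cos_le_one _) (abs_nonneg _) (hφb x)
    have h2 : |r ^ n / n| ≤ r ^ n := by
      rw [abs_of_nonneg (by positivity)]
      rcases Nat.eq_zero_or_pos n with h | h
      · simp [h]
      · rw [div_le_iff₀ (by exact_mod_cast h : (0:ℝ) < n)]
        nlinarith [pow_nonneg hr0 n, (by exact_mod_cast h : (1:ℝ) ≤ n)]
    calc ‖F n x‖ = |r ^ n / n| * |Real.cos (2 * π * n * x) * φ x| := by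
          rw [hF]; rw [Real.norm_eq_abs, abs_neg, abs_mul]
      _ ≤ |r ^ n / n| * 1 := by
          exact mul_le_mul_of_nonneg_left h1 (abs_nonneg _)
      _ ≤ r ^ n := by rw [mul_one]; exact h2
  have hsum : Summable fun n : ℕ => ∫ x in Ioo (0:ℝ) 1, ‖F n x‖ := by
    refine Summable.of_nonneg_of_le (fun n => ?_) (fun n => ?_)
      (summable_geometric_of_lt_one hr0 hr1)
    · exact integral_nonneg fun x => norm_nonneg _
    · calc (∫ x in Ioo (0:ℝ) 1, ‖F n x‖) ≤ ∫ _x in Ioo (0:ℝ) 1, r ^ n := by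
            refine setIntegral_mono_on ((hInt n).norm) ?_ measurableSet_Ioo
              (fun x _ => hnormb n x)
            exact integrableOn_const (by simp [Real.volume_Ioo])
        _ = r ^ n := by
            rw [setIntegral_const]
            simp [Real.volume_Ioo]
  calc (∫ x in Ioo (0:ℝ) 1, LL r x * φ x) = ∫ x in Ioo (0:ℝ) 1, ∑' n : ℕ, F n x :=
        setIntegral_congr_fun measurableSet_Ioo fun x _ => ((hkey x).tsum_eq).symm
    _ = ∑' n : ℕ, ∫ x in Ioo (0:ℝ) 1, F n x :=
        (integral_tsum_of_summable_integral_norm hInt hsum).symm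
    _ = ∑' n : ℕ, -((r ^ n / n) * ∫ x in Ioo (0:ℝ) 1, Real.cos (2 * π * n * x) * φ x) := by
        refine tsum_congr fun n => ?_
        rw [hF]
        rw [integral_neg, integral_const_mul]
    _ = -∑' n : ℕ, (r ^ n / n) * ∫ x in Ioo (0:ℝ) 1, Real.cos (2 * π * n * x) * φ x := by
        rw [tsum_neg]

lemma ae_ne_half : ∀ᵐ x : ℝ ∂volume, x ≠ (1/2:ℝ) := by
  rw [ae_iff]
  simp only [ne_eq, not_not, Set.setOf_eq_eq_singleton]
  exact measure_singleton _

lemma tendsto_LL {φ : ℝ → ℝ} (hφc : Continuous φ) (hφb : ∀ x, |φ x| ≤ 1) :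
    Tendsto (fun r => ∫ x in Ioo (0:ℝ) 1, LL r x * φ x) (nhdsWithin 1 (Iio 1))
      (nhds (∫ x in Ioo (0:ℝ) 1, LL 1 x * φ x)) := by
  refine tendsto_integral_filter_of_dominated_convergence G ?_ ?_ G_int ?_
  · filter_upwards with r
    exact ((LL_meas r).mul hφc.measurable).aestronglyMeasurable
  · have hIoo : Ioo (0:ℝ) 1 ∈ nhdsWithin (1:ℝ) (Iio 1) :=
      Ioo_mem_nhdsLT_of_mem (by constructor <;> norm_num)
    filter_upwards [hIoo] with r hr
    filter_upwards [ae_restrict_mem measurableSet_Ioo, ae_restrict_of_ae ae_ne_half]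
      with x hx hne
    have hLL := LL_bound (r := r) (by rw [abs_of_nonneg hr.1.le]; exact hr.2.le) hx hne
    calc ‖LL r x * φ x‖ = |LL r x| * |φ x| := abs_mul _ _
      _ ≤ G x * 1 := mul_le_mul hLL (hφb x) (abs_nonneg _) ((abs_nonneg _).trans hLL)
      _ = G x := mul_one _
  · filter_upwards [ae_restrict_mem measurableSet_Ioo] with x hx
    have habs : Continuous fun r : ℝ =>
        (norm : ℂ → ℝ) (1 - (r:ℂ) * Complex.exp ((2*π*x : ℝ) * Complex.I)) := by
      apply continuous_norm.comp
      fun_prop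
    have hval : (norm : ℂ → ℝ) (1 - ((1:ℝ):ℂ) * Complex.exp ((2*π*x : ℝ) * Complex.I))
        = 2 * Real.sin (π * x) := by
      rw [Complex.ofReal_one, one_mul, abs_one_sub_exp hx]
    have hpos : 0 < Real.sin (π * x) := Real.sin_pos_of_pos_of_lt_pi
      (mul_pos Real.pi_pos hx.1) (by nlinarith [Real.pi_pos, hx.2])
    have hne : (norm : ℂ → ℝ) (1 - ((1:ℝ):ℂ) * Complex.exp ((2*π*x : ℝ) * Complex.I)) ≠ 0 := by
      rw [hval]; positivity
    have hc : ContinuousAt (fun r : ℝ => LL r x) 1 := by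
      unfold LL
      have := ContinuousAt.comp (x := (1:ℝ))
        (g := Real.log)
        (f := fun r : ℝ => (norm : ℂ → ℝ) (1 - (r:ℂ) * Complex.exp ((2*π*x : ℝ) * Complex.I)))
        (Real.continuousAt_log hne) habs.continuousAt
      exact this
    exact ((hc.tendsto.mono_left nhdsWithin_le_nhds).mul_const (φ x))

lemma integrable_log_mul {φ : ℝ → ℝ} (hφm : Measurable φ) (hφb : ∀ x, |φ x| ≤ 1) :
    IntegrableOn (fun x => Real.log (2 * Real.sin (π * x)) * φ x) (Ioo (0:ℝ) 1) volume := by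
  refine Integrable.mono' G_int ?_ ?_
  · exact ((Real.measurable_log.comp (by fun_prop)).mul hφm).aestronglyMeasurable
  · filter_upwards [ae_restrict_mem measurableSet_Ioo, ae_restrict_of_ae ae_ne_half]
      with x hx hne
    have h1 : Real.log (2 * Real.sin (π * x)) = LL 1 x := (LL_one hx).symm
    have hLL := LL_bound (r := 1) (by norm_num) hx hne
    calc ‖Real.log (2 * Real.sin (π * x)) * φ x‖
        = |LL 1 x| * |φ x| := by rw [Real.norm_eq_abs, abs_mul, h1]
      _ ≤ G x * 1 := mul_le_mul hLL (hφb x) (abs_nonneg _) ((abs_nonneg _).trans hLL)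
      _ = G x := mul_one _

lemma val_one {r : ℝ} (hr0 : 0 ≤ r) (hr1 : r < 1) :
    (∫ x in Ioo (0:ℝ) 1, LL r x * (1:ℝ)) = 0 := by
  rw [series_integral hr0 hr1 continuous_const (by intro x; rw [abs_one])]
  have hterm : ∀ n : ℕ,
      (r ^ n / n) * (∫ x in Ioo (0:ℝ) 1, Real.cos (2 * π * n * x) * (1:ℝ)) = 0 := by
    intro n
    rcases Nat.eq_zero_or_pos n with h | h
    · subst h; simp
    · have h2 := cI_one n h
      simp only [mul_one]
      rw [h2, mul_zero]
  rw [tsum_congr hterm, tsum_zero, neg_zero]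

lemma val_cos {r : ℝ} (hr0 : 0 ≤ r) (hr1 : r < 1) {k : ℕ} (hk : 1 ≤ k) :
    (∫ x in Ioo (0:ℝ) 1, LL r x * Real.cos (2 * π * k * x)) = -(r ^ k / (2 * k)) := by
  rw [series_integral hr0 hr1
    (φ := fun x : ℝ => Real.cos (2 * π * k * x)) (by continuity)
    (fun x => Real.abs_cos_le_one _)]
  have hterm : ∀ n : ℕ,
      (r ^ n / n) * (∫ x in Ioo (0:ℝ) 1, Real.cos (2 * π * n * x) * Real.cos (2 * π * k * x))
        = if n = k then r ^ k / (2 * k) else 0 := by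
    intro n
    rw [cI_cos n k hk]
    rcases eq_or_ne n k with h | h
    · rw [if_pos h, if_pos h, h]
      rw [div_mul_div_comm, mul_one, mul_comm (k:ℝ) 2]
    · rw [if_neg h, if_neg h, mul_zero]
  rw [tsum_congr hterm, tsum_ite_eq]

lemma val_sin {r : ℝ} (hr0 : 0 ≤ r) (hr1 : r < 1) (k : ℕ) :
    (∫ x in Ioo (0:ℝ) 1, LL r x * Real.sin (2 * π * k * x)) = 0 := by
  rw [series_integral hr0 hr1
    (φ := fun x : ℝ => Real.sin (2 * π * k * x)) (by continuity)
    (fun x => Real.abs_sin_le_one _)]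
  have hterm : ∀ n : ℕ,
      (r ^ n / n) * (∫ x in Ioo (0:ℝ) 1, Real.cos (2 * π * n * x) * Real.sin (2 * π * k * x))
        = 0 := by
    intro n
    rw [cI_sin n k, mul_zero]
  rw [tsum_congr hterm, tsum_zero, neg_zero]

lemma hIoo_mem : Ioo (0:ℝ) 1 ∈ nhdsWithin (1:ℝ) (Iio 1) :=
  Ioo_mem_nhdsLT_of_mem (by constructor <;> norm_num)


/-- Let `g(x) = 1 − log(2 sin(πx))` for `0 < x < 1`.  Then `g` is
integrable on `(0,1)` with `∫_0^1 g = 1`, and for every integer `k ≥ 1`,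
`∫_0^1 g(x) cos(2πkx) dx = 1/(2k)` and `∫_0^1 g(x) sin(2πkx) dx = 0`. -/
theorem stmt_10 :
    IntegrableOn (fun x : ℝ => 1 - Real.log (2 * Real.sin (Real.pi * x)))
      (Set.Ioo 0 1) volume ∧
    (∫ x in Set.Ioo (0 : ℝ) 1, (1 - Real.log (2 * Real.sin (Real.pi * x))) = 1) ∧
    ∀ k : ℕ, 1 ≤ k →
      (∫ x in Set.Ioo (0 : ℝ) 1,
          (1 - Real.log (2 * Real.sin (Real.pi * x))) * Real.cos (2 * Real.pi * k * x) =
        1 / (2 * k)) ∧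
      (∫ x in Set.Ioo (0 : ℝ) 1,
          (1 - Real.log (2 * Real.sin (Real.pi * x))) * Real.sin (2 * Real.pi * k * x) = 0) := by
  have icst : IntegrableOn (fun _ : ℝ => (1:ℝ)) (Ioo (0:ℝ) 1) volume :=
    integrableOn_const (by simp [Real.volume_Ioo])
  have ilog : IntegrableOn (fun x : ℝ => Real.log (2 * Real.sin (π * x))) (Ioo (0:ℝ) 1)
      volume := by
    have := integrable_log_mul (φ := fun _ : ℝ => (1:ℝ)) measurable_const (by simp)
    simpa using this
  -- value of the plain log integral
  have hlog : (∫ x in Ioo (0:ℝ) 1, Real.log (2 * Real.sin (π * x))) = 0 := by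
    have t1 := tendsto_LL (φ := fun _ : ℝ => (1:ℝ)) continuous_const (by simp)
    have e1 : (fun r : ℝ => ∫ x in Ioo (0:ℝ) 1, LL r x * (1:ℝ))
        =ᶠ[nhdsWithin (1:ℝ) (Iio 1)] fun _ => (0:ℝ) := by
      filter_upwards [hIoo_mem] with r hr
      exact val_one hr.1.le hr.2
    have t2 := t1.congr' e1
    have hval := tendsto_nhds_unique t2 tendsto_const_nhds
    have hval' : (∫ x in Ioo (0:ℝ) 1, LL 1 x * (1:ℝ)) = 0 := by simpa using hval
    have heq : (∫ x in Ioo (0:ℝ) 1, Real.log (2 * Real.sin (π * x)))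
        = ∫ x in Ioo (0:ℝ) 1, LL 1 x * (1:ℝ) :=
      setIntegral_congr_fun measurableSet_Ioo fun x hx => by rw [mul_one, LL_one hx]
    rw [heq]; exact hval'
  refine ⟨icst.sub ilog, ?_, ?_⟩
  · rw [integral_sub icst ilog, hlog, sub_zero, setIntegral_const]
    simp [Real.volume_Ioo]
  · intro k hk
    have hkpos : (0:ℝ) < k := by exact_mod_cast hk
    have hcosc : Continuous fun x : ℝ => Real.cos (2 * π * k * x) :=
      Real.continuous_cos.comp (continuous_const.mul continuous_id)
    have hsinc : Continuous fun x : ℝ => Real.sin (2 * π * k * x) :=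
      Real.continuous_sin.comp (continuous_const.mul continuous_id)
    -- cos coefficient of the log
    have hlogcos : (∫ x in Ioo (0:ℝ) 1, Real.log (2 * Real.sin (π * x))
        * Real.cos (2 * π * k * x)) = -(1 / (2 * k)) := by
      have t1 := tendsto_LL (φ := fun x : ℝ => Real.cos (2 * π * k * x)) hcosc
        (fun x => Real.abs_cos_le_one _)
      have e1 : (fun r : ℝ => ∫ x in Ioo (0:ℝ) 1, LL r x * Real.cos (2 * π * k * x))
          =ᶠ[nhdsWithin (1:ℝ) (Iio 1)] fun r => -(r ^ k / (2 * k)) := by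
        filter_upwards [hIoo_mem] with r hr
        exact val_cos hr.1.le hr.2 hk
      have l2 : Tendsto (fun r : ℝ => -(r ^ k / (2 * (k:ℝ)))) (nhdsWithin (1:ℝ) (Iio 1))
          (nhds (-(1 / (2 * k)))) := by
        have hc : Continuous fun r : ℝ => -(r ^ k / (2 * (k:ℝ))) :=
          ((continuous_pow k).div_const _).neg
        have := (hc.tendsto 1).mono_left (nhdsWithin_le_nhds (s := Iio 1))
        simpa using this
      have hval := tendsto_nhds_unique (t1.congr' e1) l2
      have hval' : (∫ x in Ioo (0:ℝ) 1, LL 1 x * Real.cos (2 * π * k * x)) = -(1 / (2 * k)) := by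
        simpa using hval
      have heq : (∫ x in Ioo (0:ℝ) 1, Real.log (2 * Real.sin (π * x)) * Real.cos (2 * π * k * x))
          = ∫ x in Ioo (0:ℝ) 1, LL 1 x * Real.cos (2 * π * k * x) :=
        setIntegral_congr_fun measurableSet_Ioo fun x hx => by rw [LL_one hx]
      rw [heq]; exact hval'
    have hlogsin : (∫ x in Ioo (0:ℝ) 1, Real.log (2 * Real.sin (π * x))
        * Real.sin (2 * π * k * x)) = 0 := by
      have t1 := tendsto_LL (φ := fun x : ℝ => Real.sin (2 * π * k * x)) hsinc
        (fun x => Real.abs_sin_le_one _)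
      have e1 : (fun r : ℝ => ∫ x in Ioo (0:ℝ) 1, LL r x * Real.sin (2 * π * k * x))
          =ᶠ[nhdsWithin (1:ℝ) (Iio 1)] fun _ => (0:ℝ) := by
        filter_upwards [hIoo_mem] with r hr
        exact val_sin hr.1.le hr.2 k
      have hval := tendsto_nhds_unique (t1.congr' e1) tendsto_const_nhds
      have hval' : (∫ x in Ioo (0:ℝ) 1, LL 1 x * Real.sin (2 * π * k * x)) = 0 := by
        simpa using hval
      have heq : (∫ x in Ioo (0:ℝ) 1, Real.log (2 * Real.sin (π * x)) * Real.sin (2 * π * k * x))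
          = ∫ x in Ioo (0:ℝ) 1, LL 1 x * Real.sin (2 * π * k * x) :=
        setIntegral_congr_fun measurableSet_Ioo fun x hx => by rw [LL_one hx]
      rw [heq]; exact hval'
    have icos : IntegrableOn (fun x : ℝ => Real.cos (2 * π * k * x)) (Ioo (0:ℝ) 1) volume :=
      contIntOn hcosc
    have isin : IntegrableOn (fun x : ℝ => Real.sin (2 * π * k * x)) (Ioo (0:ℝ) 1) volume :=
      contIntOn hsinc
    have ilogcos := integrable_log_mul (φ := fun x : ℝ => Real.cos (2 * π * k * x))
      (by fun_prop) (fun x => Real.abs_cos_le_one _)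
    have ilogsin := integrable_log_mul (φ := fun x : ℝ => Real.sin (2 * π * k * x))
      (by fun_prop) (fun x => Real.abs_sin_le_one _)
    constructor
    · have hsplit : (∫ x in Ioo (0:ℝ) 1,
          (1 - Real.log (2 * Real.sin (π * x))) * Real.cos (2 * π * k * x))
          = (∫ x in Ioo (0:ℝ) 1, Real.cos (2 * π * k * x))
            - ∫ x in Ioo (0:ℝ) 1, Real.log (2 * Real.sin (π * x)) * Real.cos (2 * π * k * x) := by
        rw [← integral_sub icos ilogcos]
        exact setIntegral_congr_fun measurableSet_Ioo fun x _ => by ring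
      rw [hsplit, hlogcos, cI_one k hk]
      ring
    · have hsplit : (∫ x in Ioo (0:ℝ) 1,
          (1 - Real.log (2 * Real.sin (π * x))) * Real.sin (2 * π * k * x))
          = (∫ x in Ioo (0:ℝ) 1, Real.sin (2 * π * k * x))
            - ∫ x in Ioo (0:ℝ) 1, Real.log (2 * Real.sin (π * x)) * Real.sin (2 * π * k * x) := by
        rw [← integral_sub isin ilogsin]
        exact setIntegral_congr_fun measurableSet_Ioo fun x _ => by ring
      have hsin0 : (∫ x in Ioo (0:ℝ) 1, Real.sin (2 * π * k * x)) = 0 := by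
        rw [ioo_eq]
        exact_mod_cast int_sin_int (k : ℤ)
      rw [hsplit, hlogsin, hsin0]
      ring
end

section
/- For every d ≥ 1, every N ≥ 1, every tuple x_1,…,x_N of points in ℝ^d, and every positive integer M, the following identity holds: Σ_{k ∈ ℤ^d, ‖k‖_∞ ≤ M} (1/r(2k)) · |Σ_{ℓ=1}^N e^{2πi⟨k, x_ℓ⟩}|² = Σ_{m,n=1}^N Π_{j=1}^d ( 1 + Σ_{k=1}^M cos(2πk(x_{m,j} − x_{n,j}))/k ). -/
open Complex Finset

private lemma exp_pair' (a : ℝ) :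
    Complex.exp (2 * Real.pi * Complex.I * (a : ℂ)) +
      Complex.exp (2 * Real.pi * Complex.I * (-(a : ℂ))) =
    2 * ((Real.cos (2 * Real.pi * a) : ℝ) : ℂ) := by
  have h1 : (2 * (Real.pi:ℂ) * Complex.I * (a : ℂ)) = ((2 * Real.pi * a : ℝ) : ℂ) * Complex.I := by
    push_cast; ring
  have h2 : (2 * (Real.pi:ℂ) * Complex.I * (-(a : ℂ))) = ((-(2 * Real.pi * a) : ℝ) : ℂ) * Complex.I := by
    push_cast; ring
  rw [h1, h2, Complex.exp_mul_I, Complex.exp_mul_I,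
    ← Complex.ofReal_cos, ← Complex.ofReal_cos, ← Complex.ofReal_sin, ← Complex.ofReal_sin,
    Real.cos_neg, Real.sin_neg]
  push_cast
  ring

private lemma key' (M : ℕ) (y : ℝ) :
    ∑ k ∈ Finset.Icc (-(M : ℤ)) (M : ℤ),
        ((1 / max 1 (2 * |(k : ℝ)|) : ℝ) : ℂ) *
          Complex.exp (2 * Real.pi * Complex.I * (((k : ℝ) * y : ℝ) : ℂ)) =
    1 + ∑ k ∈ Finset.Icc 1 M, ((Real.cos (2 * Real.pi * k * y) : ℝ) : ℂ) / (k : ℂ) := by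
  induction M with
  | zero => simp
  | succ M ih =>
    have h2M : (1 : ℝ) ≤ 2 * ((M : ℝ) + 1) := by
      have : (0:ℝ) ≤ (M:ℝ) := Nat.cast_nonneg M
      linarith
    have hset : Finset.Icc (-((M + 1 : ℕ) : ℤ)) ((M + 1 : ℕ) : ℤ)
        = insert (-((M : ℤ) + 1)) (insert ((M : ℤ) + 1) (Finset.Icc (-(M : ℤ)) (M : ℤ))) := by
      ext t
      simp only [Finset.mem_Icc, Finset.mem_insert]
      omega
    rw [hset, Finset.sum_insert (by simp only [Finset.mem_insert, Finset.mem_Icc]; omega),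
      Finset.sum_insert (by simp only [Finset.mem_Icc]; omega), ih,
      Finset.sum_Icc_succ_top (by omega : 1 ≤ M + 1)]
    have ha := exp_pair' (((M : ℝ) + 1) * y)
    have c1 : ((-((M : ℤ) + 1) : ℤ) : ℝ) = -((M : ℝ) + 1) := by push_cast; ring
    have c2 : ((((M : ℤ) + 1) : ℤ) : ℝ) = (M : ℝ) + 1 := by push_cast; ring
    rw [c1, c2, _root_.abs_neg, _root_.abs_of_nonneg (by positivity : (0:ℝ) ≤ (M:ℝ)+1),
      max_eq_right h2M]
    have e1 : ((-((M : ℝ) + 1) * y : ℝ) : ℂ) = -(((((M : ℝ) + 1) * y : ℝ)) : ℂ) := by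
      push_cast; ring
    rw [e1]
    have c3 : Real.cos (2 * Real.pi * ((M + 1 : ℕ) : ℝ) * y)
        = Real.cos (2 * Real.pi * (((M : ℝ) + 1) * y)) := by
      push_cast; ring_nf
    rw [c3]
    have c4 : ((M + 1 : ℕ) : ℂ) = (M : ℂ) + 1 := by push_cast; ring
    rw [c4]
    have hne : ((M : ℂ) + 1) ≠ 0 := by
      intro h
      have := congrArg Complex.re h
      simp at this
      nlinarith [Nat.cast_nonneg (α := ℝ) M, this]
    push_cast at ha ⊢
    linear_combination (norm := (field_simp; ring1)) (1/(2*((M:ℂ)+1))) * ha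



/-- For every `d ≥ 1`, every `N ≥ 1`, every tuple `x_1,…,x_N` of points
of `ℝ^d`, and every positive integer `M`:
`Σ_{k ∈ ℤ^d, ‖k‖_∞ ≤ M} (1/r(2k)) |Σ_{ℓ=1}^N e^{2πi⟨k,x_ℓ⟩}|²
  = Σ_{m,n=1}^N Π_{j=1}^d (1 + Σ_{k=1}^M cos(2πk(x_{m,j} − x_{n,j}))/k)`,
where `r(2k) = Π_j max{1, 2|k_j|}`. -/
theorem stmt_12 (d N M : ℕ) (hd : 1 ≤ d) (hN : 1 ≤ N) (hM : 1 ≤ M)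
    (x : Fin N → Fin d → ℝ) :
    ∑ k ∈ Fintype.piFinset (fun _ : Fin d => Finset.Icc (-(M : ℤ)) (M : ℤ)),
        (1 / ∏ j : Fin d, max 1 (2 * |(k j : ℝ)|)) *
          ‖∑ ℓ : Fin N,
              Complex.exp (2 * Real.pi * Complex.I * (∑ j : Fin d, (k j : ℝ) * x ℓ j))‖ ^ 2
      = ∑ m : Fin N, ∑ n : Fin N,
          ∏ j : Fin d,
            (1 + ∑ k ∈ Finset.Icc 1 M, Real.cos (2 * Real.pi * k * (x m j - x n j)) / k) := by
  -- pointwise identity for each frequency vector k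
  have hz : ∀ k : Fin d → ℤ,
      ((((1 : ℝ) / ∏ j : Fin d, max 1 (2 * |(k j : ℝ)|)) *
        ‖∑ ℓ : Fin N, Complex.exp (2 * Real.pi * Complex.I *
          (∑ j : Fin d, (k j : ℝ) * x ℓ j))‖ ^ 2 : ℝ) : ℂ)
      = ∑ m : Fin N, ∑ n : Fin N, ∏ j : Fin d,
          ((1 / max 1 (2 * |(k j : ℝ)|) : ℝ) : ℂ) *
            Complex.exp (2 * Real.pi * Complex.I * (((k j : ℝ) * (x m j - x n j) : ℝ) : ℂ)) := by
    intro k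
    set S : Fin N → ℝ := fun ℓ => ∑ j : Fin d, (k j : ℝ) * x ℓ j with hS
    set z : ℂ := ∑ ℓ : Fin N, Complex.exp (2 * Real.pi * Complex.I * ((S ℓ : ℝ) : ℂ)) with hzdef
    have hnorm : ((‖z‖ ^ 2 : ℝ) : ℂ) = z * (starRingEnd ℂ) z := by
      rw [Complex.mul_conj]
      norm_cast
      rw [Complex.normSq_eq_norm_sq]
    have hconj : (starRingEnd ℂ) z =
        ∑ ℓ : Fin N, Complex.exp (-(2 * Real.pi * Complex.I * ((S ℓ : ℝ) : ℂ))) := by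
      rw [hzdef, map_sum]
      refine Finset.sum_congr rfl fun ℓ _ => ?_
      rw [← Complex.exp_conj]
      congr 1
      simp only [map_mul, Complex.conj_I, Complex.conj_ofReal, map_ofNat]
      ring
    rw [Complex.ofReal_mul, hnorm, hconj, Finset.sum_mul_sum]
    have hsum : ∀ m n : Fin N,
        Complex.exp (2 * Real.pi * Complex.I * ((S m : ℝ) : ℂ)) *
          Complex.exp (-(2 * Real.pi * Complex.I * ((S n : ℝ) : ℂ)))
        = Complex.exp (2 * Real.pi * Complex.I *
            ((∑ j : Fin d, (k j : ℝ) * (x m j - x n j) : ℝ) : ℂ)) := by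
      intro m n
      rw [← Complex.exp_add]
      congr 1
      have : (∑ j : Fin d, (k j : ℝ) * (x m j - x n j)) = S m - S n := by
        rw [hS]
        simp only
        rw [← Finset.sum_sub_distrib]
        exact Finset.sum_congr rfl fun j _ => by ring
      rw [this]
      push_cast
      ring
    rw [Finset.sum_congr rfl fun m _ => Finset.sum_congr rfl fun n _ => hsum m n]
    rw [Finset.mul_sum]
    refine Finset.sum_congr rfl fun m _ => ?_
    rw [Finset.mul_sum]
    refine Finset.sum_congr rfl fun n _ => ?_
    have hc : ((1 / ∏ j : Fin d, max 1 (2 * |(k j : ℝ)|) : ℝ) : ℂ)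
        = ∏ j : Fin d, ((1 / max 1 (2 * |(k j : ℝ)|) : ℝ) : ℂ) := by
      rw [← Complex.ofReal_prod]
      congr 1
      rw [one_div, ← Finset.prod_inv_distrib]
      simp [one_div]
    have he : Complex.exp (2 * Real.pi * Complex.I *
          ((∑ j : Fin d, (k j : ℝ) * (x m j - x n j) : ℝ) : ℂ))
        = ∏ j : Fin d, Complex.exp (2 * Real.pi * Complex.I *
            (((k j : ℝ) * (x m j - x n j) : ℝ) : ℂ)) := by
      rw [← Complex.exp_sum]
      congr 1
      push_cast
      rw [Finset.mul_sum]
    rw [hc, he, ← Finset.prod_mul_distrib]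
  -- now assemble
  apply Complex.ofReal_injective
  rw [Complex.ofReal_sum, Finset.sum_congr rfl fun k _ => hz k, Finset.sum_comm]
  rw [Complex.ofReal_sum]
  refine Finset.sum_congr rfl fun m _ => ?_
  rw [Finset.sum_comm, Complex.ofReal_sum]
  refine Finset.sum_congr rfl fun n _ => ?_
  rw [← Finset.prod_univ_sum (fun _ : Fin d => Finset.Icc (-(M : ℤ)) (M : ℤ))
    (fun j t => ((1 / max 1 (2 * |(t : ℝ)|) : ℝ) : ℂ) *
      Complex.exp (2 * Real.pi * Complex.I * (((t : ℝ) * (x m j - x n j) : ℝ) : ℂ)))]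
  rw [Finset.prod_congr rfl fun j _ => key' M (x m j - x n j)]
  rw [Complex.ofReal_prod]
  refine Finset.prod_congr rfl fun j _ => ?_
  push_cast
  ring
end

section
/- Let N ≥ 2, let a be an integer coprime to N with a² ≡ 1 (mod N), and let ε, δ be real numbers. Then the quadratic form arising as the second-order term of the energy of a perturbed lattice rule is controlled by its diagonal: π² |εδ| · |Σ_{n=1}^{N−1} cot(πn/N) cot(π{an/N})| ≤ (π² ε²/2) Σ_{n=1}^{N−1} (1/sin²(πn/N)) (1 − log(2 sin(π{an/N}))) + (π² δ²/2) Σ_{n=1}^{N−1} (1/sin²(π{an/N})) (1 − log(2 sin(πn/N))). -/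
lemma log2s (s : ℝ) (hs : 0 < s) : Real.log (2*s) ≤ s^2 := by
  have h := Real.log_le_sub_one_of_pos (by linarith : (0:ℝ) < 2*s)
  nlinarith [sq_nonneg (s-1)]

lemma aux (ε δ x y : ℝ) (hx : 0 < Real.sin x) (hy : 0 < Real.sin y) :
    |ε * δ| * |Real.cot x * Real.cot y| ≤
      ε^2/2 * ((1/Real.sin x^2) * (1 - Real.log (2*Real.sin y))) +
      δ^2/2 * ((1/Real.sin y^2) * (1 - Real.log (2*Real.sin x))) := by
  have hx1 : Real.sin x ≤ 1 := Real.sin_le_one x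
  have hy1 : Real.sin y ≤ 1 := Real.sin_le_one y
  have hlx : Real.log (2*Real.sin x) ≤ Real.sin x ^ 2 := log2s _ hx
  have hly : Real.log (2*Real.sin y) ≤ Real.sin y ^ 2 := log2s _ hy
  have hcx : Real.cos x ^ 2 = 1 - Real.sin x ^ 2 := by
    have := Real.sin_sq_add_cos_sq x; linarith
  have hcy : Real.cos y ^ 2 = 1 - Real.sin y ^ 2 := by
    have := Real.sin_sq_add_cos_sq y; linarith
  rw [Real.cot_eq_cos_div_sin, Real.cot_eq_cos_div_sin, abs_mul, abs_mul]
  set A : ℝ := ε^2/2 * ((1/Real.sin x^2) * (1 - Real.log (2*Real.sin y))) with hA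
  set B : ℝ := δ^2/2 * ((1/Real.sin y^2) * (1 - Real.log (2*Real.sin x))) with hB
  have hAnn : 0 ≤ A := by
    apply mul_nonneg (by positivity)
    apply mul_nonneg (by positivity)
    nlinarith
  have hBnn : 0 ≤ B := by
    apply mul_nonneg (by positivity)
    apply mul_nonneg (by positivity)
    nlinarith
  set P : ℝ := |ε| * |Real.cos x / Real.sin x| with hP
  set Q : ℝ := |δ| * |Real.cos y / Real.sin y| with hQ
  have hPnn : 0 ≤ P := by positivity
  have hQnn : 0 ≤ Q := by positivity
  have hPQ : (P*Q)^2 ≤ (2*A) * (2*B) := by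
    have hP2 : P^2 = ε^2 * (Real.cos x^2 / Real.sin x^2) := by
      rw [hP, mul_pow, sq_abs, sq_abs, div_pow]
    have hQ2 : Q^2 = δ^2 * (Real.cos y^2 / Real.sin y^2) := by
      rw [hQ, mul_pow, sq_abs, sq_abs, div_pow]
    have h2A : 2*A = ε^2 * ((1 - Real.log (2*Real.sin y)) / Real.sin x^2) := by
      rw [hA]; ring
    have h2B : 2*B = δ^2 * ((1 - Real.log (2*Real.sin x)) / Real.sin y^2) := by
      rw [hB]; ring
    have key : Real.cos x^2 * Real.cos y^2 ≤
        (1 - Real.log (2*Real.sin y)) * (1 - Real.log (2*Real.sin x)) := by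
      nlinarith [sq_nonneg (Real.cos x), sq_nonneg (Real.cos y)]
    rw [mul_pow, hP2, hQ2, h2A, h2B]
    have eq1 : ε^2 * (Real.cos x^2/Real.sin x^2) * (δ^2*(Real.cos y^2/Real.sin y^2)) =
        (ε^2*δ^2/(Real.sin x^2*Real.sin y^2)) * (Real.cos x^2*Real.cos y^2) := by ring
    have eq2 : ε^2 * ((1 - Real.log (2*Real.sin y))/Real.sin x^2) *
        (δ^2*((1 - Real.log (2*Real.sin x))/Real.sin y^2)) =
        (ε^2*δ^2/(Real.sin x^2*Real.sin y^2)) *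
          ((1 - Real.log (2*Real.sin y)) * (1 - Real.log (2*Real.sin x))) := by ring
    rw [eq1, eq2]
    exact mul_le_mul_of_nonneg_left key (by positivity)
  have habs : |ε| * |δ| * (|Real.cos x / Real.sin x| * |Real.cos y / Real.sin y|) = P * Q := by
    rw [hP, hQ]; ring
  rw [habs]
  have h2 : (P*Q)^2 ≤ (A+B)^2 := by nlinarith [sq_nonneg (A-B)]
  exact (abs_le_of_sq_le_sq' h2 (by linarith)).2

/-- Let `N ≥ 2`, `a` coprime to `N` with `a² ≡ 1 (mod N)`, and let
`ε, δ` be real.  Then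
`π²|εδ| · |Σ_{n=1}^{N−1} cot(πn/N) cot(π{an/N})|
  ≤ (π²ε²/2) Σ_{n=1}^{N−1} (1/sin²(πn/N))(1 − log(2 sin(π{an/N})))
  + (π²δ²/2) Σ_{n=1}^{N−1} (1/sin²(π{an/N}))(1 − log(2 sin(πn/N)))`. -/
theorem stmt_14 (N : ℕ) (hN : 2 ≤ N) (a : ℤ) (ha : Int.gcd a N = 1)
    (ha2 : Int.ModEq (N : ℤ) (a ^ 2) 1) (ε δ : ℝ) :
    Real.pi ^ 2 * |ε * δ| *
        |∑ n ∈ Finset.Ico 1 N,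
            Real.cot (Real.pi * n / N) * Real.cot (Real.pi * Int.fract ((a : ℝ) * n / N))| ≤
      Real.pi ^ 2 * ε ^ 2 / 2 *
          ∑ n ∈ Finset.Ico 1 N,
            (1 / Real.sin (Real.pi * n / N) ^ 2) *
              (1 - Real.log (2 * Real.sin (Real.pi * Int.fract ((a : ℝ) * n / N)))) +
        Real.pi ^ 2 * δ ^ 2 / 2 *
          ∑ n ∈ Finset.Ico 1 N,
            (1 / Real.sin (Real.pi * Int.fract ((a : ℝ) * n / N)) ^ 2) *
              (1 - Real.log (2 * Real.sin (Real.pi * n / N))) := by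
  have hNpos : (0:ℝ) < N := by positivity
  have hpi := Real.pi_pos
  -- sin positivity facts for each n
  have hsin1 : ∀ n ∈ Finset.Ico 1 N, 0 < Real.sin (Real.pi * n / N) := by
    intro n hn
    rw [Finset.mem_Ico] at hn
    apply Real.sin_pos_of_pos_of_lt_pi
    · have : (0:ℝ) < n := by exact_mod_cast hn.1
      positivity
    · rw [div_lt_iff₀ hNpos]
      have : (n:ℝ) < N := by exact_mod_cast hn.2
      nlinarith
  have hsin2 : ∀ n ∈ Finset.Ico 1 N, 0 < Real.sin (Real.pi * Int.fract ((a : ℝ) * n / N)) := by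
    intro n hn
    rw [Finset.mem_Ico] at hn
    have hndvd : ¬ ((N:ℤ) ∣ a * n) := by
      intro h
      have hc : Int.gcd (N:ℤ) a = 1 := by rw [Int.gcd_comm]; exact ha
      rw [mul_comm] at h
      have hdn : (N:ℤ) ∣ (n:ℤ) := Int.dvd_of_dvd_mul_left_of_gcd_one h hc
      have : N ∣ n := by exact_mod_cast hdn
      have := Nat.le_of_dvd (by omega) this
      omega
    have hfr : Int.fract ((a : ℝ) * n / N) = ((a * n % N : ℤ) : ℝ) / (N : ℝ) := by
      have : ((a : ℝ) * n / N) = ((a * (n:ℤ) : ℤ) : ℝ) / (N : ℕ) := by push_cast; ring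
      rw [this, Int.fract_div_intCast_eq_div_intCast_mod]
    have hmpos : 0 < a * n % N := by
      have h0 : 0 ≤ a * n % N := Int.emod_nonneg _ (by exact_mod_cast (by omega : N ≠ 0))
      rcases lt_or_eq_of_le h0 with h | h
      · exact h
      · exfalso; exact hndvd (Int.dvd_of_emod_eq_zero h.symm)
    have hmlt : a * n % N < N := Int.emod_lt_of_pos _ (by exact_mod_cast (by omega : 0 < N))
    have h0 : (0:ℝ) < ((a * n % N : ℤ) : ℝ) := by exact_mod_cast hmpos
    have h1 : ((a * n % N : ℤ) : ℝ) < N := by exact_mod_cast hmlt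
    have hq0 : (0:ℝ) < ((a * n % N : ℤ) : ℝ) / N := by positivity
    have hq1 : ((a * n % N : ℤ) : ℝ) / N < 1 := (div_lt_one hNpos).mpr h1
    apply Real.sin_pos_of_pos_of_lt_pi
    · rw [hfr]; positivity
    · rw [hfr]; nlinarith
  calc Real.pi ^ 2 * |ε * δ| *
        |∑ n ∈ Finset.Ico 1 N,
            Real.cot (Real.pi * n / N) * Real.cot (Real.pi * Int.fract ((a : ℝ) * n / N))|
      ≤ Real.pi ^ 2 * |ε * δ| *
        ∑ n ∈ Finset.Ico 1 N,
            |Real.cot (Real.pi * n / N) * Real.cot (Real.pi * Int.fract ((a : ℝ) * n / N))| := by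
        apply mul_le_mul_of_nonneg_left (Finset.abs_sum_le_sum_abs _ _) (by positivity)
    _ = ∑ n ∈ Finset.Ico 1 N, Real.pi ^ 2 * (|ε * δ| *
            |Real.cot (Real.pi * n / N) * Real.cot (Real.pi * Int.fract ((a : ℝ) * n / N))|) := by
        rw [Finset.mul_sum]; congr 1; ext n; ring
    _ ≤ ∑ n ∈ Finset.Ico 1 N, Real.pi ^ 2 *
          (ε^2/2 * ((1 / Real.sin (Real.pi * n / N) ^ 2) *
              (1 - Real.log (2 * Real.sin (Real.pi * Int.fract ((a : ℝ) * n / N))))) +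
           δ^2/2 * ((1 / Real.sin (Real.pi * Int.fract ((a : ℝ) * n / N)) ^ 2) *
              (1 - Real.log (2 * Real.sin (Real.pi * n / N))))) := by
        apply Finset.sum_le_sum
        intro n hn
        exact mul_le_mul_of_nonneg_left (aux ε δ _ _ (hsin1 n hn) (hsin2 n hn)) (by positivity)
    _ = _ := by
        rw [Finset.mul_sum, Finset.mul_sum, ← Finset.sum_add_distrib]
        congr 1; ext n; ring
end
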